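/- arXiv:1909.12186 — 8 statements merged into one kernel-verified Lean document; each statement's English description precedes it below -/
import Mathlib

section
/- Let ψ : U → ℝⁿ be a C^∞ map on an open set U ⊆ ℝᵐ (m ≤ n) whose derivative Dψ(u) : ℝᵐ → ℝⁿ is injective for every u ∈ U, and let u₀ ∈ U satisfy Dψ(u₀)ᵀ Dψ(u₀) = Idₘ (the parametrization is orthonormal at u₀). Let a₀ ∈ ℝⁿ satisfy Dψ(u₀)ᵀ(a₀ − ψ(u₀)) = 0, and assume the Hessian H of d_{a₀}(u) := ½‖a₀ − ψ(u)‖² at u₀ is invertible. Then there exist open neighborhoods A ⊆ ℝⁿ of a₀ and U′ ⊆ U of u₀ and a C^∞ map σ : A → U′ with σ(a₀) = u₀ such that: (i) for every a ∈ A, σ(a) is the unique u ∈ U′ with Dψ(u)ᵀ(a − ψ(u)) = 0; (ii) the critical-point map x := ψ ∘ σ satisfies Dx(a₀) = Dψ(u₀) H⁻¹ Dψ(u₀)ᵀ; and (iii) lim_{ε→0⁺} sup{ ‖x(a) − x(a₀)‖/‖a − a₀‖ : a ∈ A, 0 < ‖a − a₀‖ ≤ ε } = ‖H⁻¹‖.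 -/
/-!
The critical points of `u ↦ ½‖a - ψ u‖²` are the zeros of
`criticalEqn ψ (a, u) = Dψ(u)ᵀ (a - ψ u)`. Since `criticalEqn ψ (a₀, ·)` is minus the gradient
of `d_{a₀}`, its derivative at `u₀` is `-H`, while its derivative in `a` is `Dψ(u₀)ᵀ`; the
implicit function theorem therefore yields a smooth solution map `σ` with
`Dσ(a₀) = H⁻¹ Dψ(u₀)ᵀ`. For any map differentiable at `a₀`, the supremum of the difference
quotients over a shrinking ball tends to the operator norm of the derivative, and
`‖Dψ(u₀) H⁻¹ Dψ(u₀)ᵀ‖ = ‖H⁻¹‖` because `Dψ(u₀)` is an isometry.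
-/

open Filter Topology Set
open scoped RealInnerProductSpace

section DiffQuotients

variable {E F : Type*} [NormedAddCommGroup E] [NormedSpace ℝ E] [NormedAddCommGroup F]
  [NormedSpace ℝ F] {f : E → F} {L : E →L[ℝ] F} {a₀ : E} {A : Set E} {ε δ : ℝ}

def diffQuotients (f : E → F) (A : Set E) (a₀ : E) (ε : ℝ) : Set ℝ :=
  {q | ∃ a ∈ A, 0 < ‖a - a₀‖ ∧ ‖a - a₀‖ ≤ ε ∧ q = ‖f a - f a₀‖ / ‖a - a₀‖}

lemma norm_add_mem_upperBounds_diffQuotients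
    (hf : ∀ a, ‖a - a₀‖ ≤ ε → ‖f a - f a₀ - L (a - a₀)‖ ≤ δ * ‖a - a₀‖) :
    ‖L‖ + δ ∈ upperBounds (diffQuotients f A a₀ ε) := by
  rintro _ ⟨a, -, hpos, hle, rfl⟩
  rw [div_le_iff₀ hpos]
  calc ‖f a - f a₀‖ ≤ ‖L (a - a₀)‖ + ‖f a - f a₀ - L (a - a₀)‖ := norm_le_insert' _ _
    _ ≤ ‖L‖ * ‖a - a₀‖ + δ * ‖a - a₀‖ := add_le_add (L.le_opNorm _) (hf a hle)
    _ = (‖L‖ + δ) * ‖a - a₀‖ := by ring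

lemma norm_le_sSup_diffQuotients_add (hε : 0 < ε) (hA : Metric.closedBall a₀ ε ⊆ A)
    (hδ : 0 ≤ δ) (hf : ∀ a, ‖a - a₀‖ ≤ ε → ‖f a - f a₀ - L (a - a₀)‖ ≤ δ * ‖a - a₀‖) :
    ‖L‖ ≤ sSup (diffQuotients f A a₀ ε) + δ := by
  have hS : 0 ≤ sSup (diffQuotients f A a₀ ε) :=
    Real.sSup_nonneg fun _ ⟨_, _, _, _, hq⟩ => hq ▸ by positivity
  refine L.opNorm_le_bound (by positivity) fun y => ?_
  rcases eq_or_ne y 0 with rfl | hy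
  · simp
  have hy' : 0 < ‖y‖ := norm_pos_iff.2 hy
  set a := a₀ + (ε / ‖y‖) • y
  have ha : a - a₀ = (ε / ‖y‖) • y := add_sub_cancel_left _ _
  have hna : ‖a - a₀‖ = ε := by
    rw [ha, norm_smul, Real.norm_of_nonneg (by positivity), div_mul_cancel₀ _ hy'.ne']
  have hq : ‖f a - f a₀‖ / ε ≤ sSup (diffQuotients f A a₀ ε) :=
    le_csSup ⟨_, norm_add_mem_upperBounds_diffQuotients hf⟩
      ⟨a, hA (by rw [Metric.mem_closedBall, dist_eq_norm, hna]), hna ▸ hε, hna.le, by rw [hna]⟩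
  have hLa : ε / ‖y‖ * ‖L y‖ ≤ ‖f a - f a₀‖ + δ * ε := by
    calc ε / ‖y‖ * ‖L y‖ = ‖L (a - a₀)‖ := by
          rw [ha, map_smul, norm_smul, Real.norm_of_nonneg (by positivity)]
      _ ≤ ‖f a - f a₀‖ + ‖L (a - a₀) - (f a - f a₀)‖ := norm_le_insert' _ _
      _ ≤ ‖f a - f a₀‖ + δ * ε := by rw [norm_sub_rev (L _), ← hna]; gcongr; exact hf a hna.le
  rw [div_le_iff₀ hε] at hq
  rw [div_mul_eq_mul_div, div_le_iff₀ hy'] at hLa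
  nlinarith

theorem tendsto_sSup_diffQuotients (hf : HasFDerivAt f L a₀) (hA : A ∈ 𝓝 a₀) :
    Tendsto (fun ε => sSup (diffQuotients f A a₀ ε)) (𝓝[>] 0) (𝓝 ‖L‖) := by
  refine Metric.tendsto_nhds.2 fun δ hδ => ?_
  obtain ⟨r, hr, hfr⟩ := Metric.eventually_nhds_iff.1 (hf.isLittleO.def (half_pos hδ))
  obtain ⟨r', hr', hr'A⟩ := Metric.mem_nhds_iff.1 hA
  filter_upwards [Ioo_mem_nhdsGT (lt_min hr hr')] with ε ⟨hε, hεr⟩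
  have hfε : ∀ a, ‖a - a₀‖ ≤ ε → ‖f a - f a₀ - L (a - a₀)‖ ≤ δ / 2 * ‖a - a₀‖ :=
    fun a ha => hfr (by rw [dist_eq_norm]; exact ha.trans_lt (hεr.trans_le (min_le_left _ _)))
  have hball : Metric.closedBall a₀ ε ⊆ A :=
    (Metric.closedBall_subset_ball (hεr.trans_le (min_le_right _ _))).trans hr'A
  have hupper := Real.sSup_le (norm_add_mem_upperBounds_diffQuotients (A := A) hfε) (by positivity)
  have hlower := norm_le_sSup_diffQuotients_add hε hball (by positivity) hfε
  rw [Real.dist_eq, abs_sub_lt_iff]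
  constructor <;> linarith

end DiffQuotients

section Adjoint

variable {𝕜 E F G : Type*} [RCLike 𝕜] [NormedAddCommGroup E] [InnerProductSpace 𝕜 E]
  [CompleteSpace E] [NormedAddCommGroup F] [InnerProductSpace 𝕜 F] [CompleteSpace F]
  [NormedAddCommGroup G] [NormedSpace 𝕜 G] {D : E →L[𝕜] F}

open ContinuousLinearMap

lemma norm_comp_adjoint_of_adjoint_comp_self (hD : adjoint D ∘L D = 1) (T : E →L[𝕜] G) :
    ‖T ∘L adjoint D‖ = ‖T‖ := by
  have hD₁ : ‖D‖ ≤ 1 :=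
    D.opNorm_le_bound zero_le_one fun x => by rw [D.norm_map_iff_adjoint_comp_self.2 hD, one_mul]
  refine le_antisymm ?_ ?_
  · calc ‖T ∘L adjoint D‖ ≤ ‖T‖ * ‖adjoint D‖ := opNorm_comp_le _ _
      _ ≤ ‖T‖ := mul_le_of_le_one_right (norm_nonneg _) (by rwa [LinearIsometryEquiv.norm_map])
  · calc ‖T‖ = ‖(T ∘L adjoint D) ∘L D‖ := by rw [comp_assoc, hD]; rfl
      _ ≤ ‖T ∘L adjoint D‖ * ‖D‖ := opNorm_comp_le _ _
      _ ≤ ‖T ∘L adjoint D‖ := mul_le_of_le_one_right (norm_nonneg _) hD₁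

lemma norm_comp_comp_adjoint_of_adjoint_comp_self (hD : adjoint D ∘L D = 1) (T : E →L[𝕜] E) :
    ‖(D ∘L T) ∘L adjoint D‖ = ‖T‖ := by
  rw [norm_comp_adjoint_of_adjoint_comp_self hD]
  exact (⟨D.toLinearMap, D.norm_map_iff_adjoint_comp_self.2 hD⟩ : E →ₗᵢ[𝕜] F)
    |>.norm_toContinuousLinearMap_comp

end Adjoint

section CriticalEqn

variable {E F : Type*} [NormedAddCommGroup E] [InnerProductSpace ℝ E] [CompleteSpace E]
  [NormedAddCommGroup F] [InnerProductSpace ℝ F] [CompleteSpace F]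

open ContinuousLinearMap

lemma contDiff_adjoint {n : WithTop ℕ∞} : ContDiff ℝ n (fun T : E →L[ℝ] F => adjoint T) :=
  -- over `ℝ` the conjugate-linear adjoint is linear: `starRingEnd ℝ` unfolds to `RingHom.id ℝ`
  ((((adjoint : (E →L[ℝ] F) ≃ₗᵢ⋆[ℝ] (F →L[ℝ] E)).toContinuousLinearEquiv :
    (E →L[ℝ] F) →SL[starRingEnd ℝ] (F →L[ℝ] E)) : (E →L[ℝ] F) →L[ℝ] (F →L[ℝ] E))).contDiff

noncomputable def criticalEqn (ψ : E → F) (p : F × E) : E :=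
  adjoint (fderiv ℝ ψ p.2) (p.1 - ψ p.2)

variable {ψ : E → F} {U : Set E}

lemma contDiffOn_criticalEqn {n : WithTop ℕ∞} (hU : IsOpen U) (hψ : ContDiffOn ℝ (n + 1) ψ U) :
    ContDiffOn ℝ n (criticalEqn ψ) (univ ×ˢ U) := by
  have hsnd : MapsTo Prod.snd (univ ×ˢ U : Set (F × E)) U := fun _ hp => hp.2
  exact ((contDiff_adjoint.comp_contDiffOn (hψ.fderiv_of_isOpen hU le_rfl)).comp
    contDiffOn_snd hsnd).clm_apply
      (contDiffOn_fst.sub ((hψ.of_le le_self_add).comp contDiffOn_snd hsnd))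

lemma eventually_contDiffAt_criticalEqn {n : WithTop ℕ∞} (hU : IsOpen U)
    (hψ : ContDiffOn ℝ (n + 1) ψ U) (a : F) {u : E} (hu : u ∈ U) :
    ∀ᶠ p in 𝓝 (a, u), ContDiffAt ℝ n (criticalEqn ψ) p :=
  eventually_of_mem ((isOpen_univ.prod hU).mem_nhds ⟨trivial, hu⟩)
    fun _ hp => (contDiffOn_criticalEqn hU hψ).contDiffAt ((isOpen_univ.prod hU).mem_nhds hp)

lemma hasFDerivAt_half_norm_sub_sq {D : E →L[ℝ] F} {u : E} (hψ : HasFDerivAt ψ D u) (a : F) :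
    HasFDerivAt (fun u => (1 / 2 : ℝ) * ‖a - ψ u‖ ^ 2) (-innerSL ℝ (adjoint D (a - ψ u))) u := by
  refine ((hψ.const_sub a).norm_sq.const_mul _).congr_fderiv ?_
  ext v
  simp [adjoint_inner_left]

lemma fderiv_fderiv_half_norm_sub_sq_apply {a : F} {u : E}
    (hψ : ∀ᶠ u' in 𝓝 u, DifferentiableAt ℝ ψ u')
    (hF : DifferentiableAt ℝ (fun u' => criticalEqn ψ (a, u')) u) (v w : E) :
    fderiv ℝ (fderiv ℝ (fun u' => (1 / 2 : ℝ) * ‖a - ψ u'‖ ^ 2)) u v w =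
      -⟪fderiv ℝ (fun u' => criticalEqn ψ (a, u')) u v, w⟫ := by
  have hgrad : fderiv ℝ (fun u' => (1 / 2 : ℝ) * ‖a - ψ u'‖ ^ 2) =ᶠ[𝓝 u]
      fun u' => -innerSL ℝ (criticalEqn ψ (a, u')) :=
    hψ.mono fun u' hu' => (hasFDerivAt_half_norm_sub_sq hu'.hasFDerivAt a).fderiv
  have hHess : HasFDerivAt (fun u' => -innerSL ℝ (criticalEqn ψ (a, u')))
      (-((innerSL ℝ : E →L[ℝ] E →L[ℝ] ℝ) ∘L fderiv ℝ (fun u' => criticalEqn ψ (a, u')) u)) u :=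
    ((innerSL ℝ : E →L[ℝ] E →L[ℝ] ℝ).hasFDerivAt.comp u hF.hasFDerivAt).neg
  rw [hgrad.fderiv_eq, hHess.fderiv]
  rfl

lemma fderiv_criticalEqn_comp_inl {a : F} {u : E}
    (hF : DifferentiableAt ℝ (criticalEqn ψ) (a, u)) :
    fderiv ℝ (criticalEqn ψ) (a, u) ∘L inl ℝ F E = adjoint (fderiv ℝ ψ u) := by
  have h₁ := hF.hasFDerivAt.comp a (hasFDerivAt_prodMk_left (𝕜 := ℝ) a u)
  have h₂ : HasFDerivAt (fun a' => criticalEqn ψ (a', u)) (adjoint (fderiv ℝ ψ u)) a :=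
    (adjoint (fderiv ℝ ψ u)).hasFDerivAt.comp a (hasFDerivAt_sub_const (ψ u))
  exact h₁.unique h₂

lemma fderiv_criticalEqn_comp_inr {a : F} {u : E} {H : E →L[ℝ] E}
    (hψ : ∀ᶠ u' in 𝓝 u, DifferentiableAt ℝ ψ u')
    (hF : DifferentiableAt ℝ (criticalEqn ψ) (a, u))
    (hH : ∀ v w, ⟪H v, w⟫ = fderiv ℝ (fderiv ℝ (fun u' => (1 / 2 : ℝ) * ‖a - ψ u'‖ ^ 2)) u v w) :
    fderiv ℝ (criticalEqn ψ) (a, u) ∘L inr ℝ F E = -H := by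
  have hF₂ : HasFDerivAt (fun u' => criticalEqn ψ (a, u'))
      (fderiv ℝ (criticalEqn ψ) (a, u) ∘L inr ℝ F E) u :=
    hF.hasFDerivAt.comp u (hasFDerivAt_prodMk_right (𝕜 := ℝ) a u)
  ext1 v
  refine ext_inner_right ℝ fun w => ?_
  rw [neg_apply, inner_neg_left, hH, fderiv_fderiv_half_norm_sub_sq_apply hψ hF₂.differentiableAt,
    hF₂.fderiv, neg_neg]

end CriticalEqn

lemma ContinuousAt.eventually_isInvertible {𝕜 E F X : Type*} [NontriviallyNormedField 𝕜]
    [NormedAddCommGroup E] [NormedSpace 𝕜 E] [CompleteSpace E] [NormedAddCommGroup F]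
    [NormedSpace 𝕜 F] [TopologicalSpace X] {g : X → E →L[𝕜] F} {x : X} (hg : ContinuousAt g x)
    (hx : (g x).IsInvertible) : ∀ᶠ y in 𝓝 x, (g y).IsInvertible :=
  hg.preimage_mem_nhds (ContinuousLinearEquiv.isOpen.mem_nhds hx)

namespace ContDiffAt

variable {𝕜 : Type*} [RCLike 𝕜]
  {E₁ : Type*} [NormedAddCommGroup E₁] [NormedSpace 𝕜 E₁] [CompleteSpace E₁]
  {E₂ : Type*} [NormedAddCommGroup E₂] [NormedSpace 𝕜 E₂] [CompleteSpace E₂]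
  {F : Type*} [NormedAddCommGroup F] [NormedSpace 𝕜 F] [CompleteSpace F]
  {u : E₁ × E₂} {f : E₁ × E₂ → F} {n : WithTop ℕ∞}
  (cdf : ContDiffAt 𝕜 n f u) (pn : n ≠ 0) (if₂ : (fderiv 𝕜 f u ∘L .inr 𝕜 E₁ E₂).IsInvertible)

lemma tendsto_prodMk_implicitFunction :
    Tendsto (fun x => (x, cdf.implicitFunction pn if₂ x)) (𝓝 u.1) (𝓝 u) := by
  have h := (cdf.contDiffAt_implicitFunction pn if₂).continuousAt.tendsto
  rw [cdf.implicitFunction_apply_self] at h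
  exact tendsto_id.prodMk_nhds h

/-- By local uniqueness, near `u.1` the implicit function agrees with the implicit function based
at any nearby solution, which is smooth at its own base point. -/
lemma eventually_contDiffAt_implicitFunction (hf : ∀ᶠ v in 𝓝 u, ContDiffAt 𝕜 n f v) :
    ∀ᶠ x in 𝓝 u.1, ContDiffAt 𝕜 n (cdf.implicitFunction pn if₂) x := by
  have hinv :=
    ((cdf.continuousAt_fderiv pn).clm_comp continuousAt_const).eventually_isInvertible if₂
  have hgood := (hf.and (hinv.and
    (cdf.eventually_apply_eq_iff_implicitFunction pn if₂))).eventually_nhds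
  filter_upwards [cdf.tendsto_prodMk_implicitFunction pn if₂ hgood,
    cdf.eventually_apply_implicitFunction pn if₂] with x hx hfx
  obtain ⟨cdfx, ifx, -⟩ := hx.self_of_nhds
  refine (cdfx.contDiffAt_implicitFunction pn ifx).congr_of_eventuallyEq ?_
  filter_upwards [cdfx.tendsto_prodMk_implicitFunction pn ifx hx,
    cdfx.eventually_apply_implicitFunction pn ifx] with y hy hfy
  exact hy.2.2.1 (hfy.trans hfx)

lemma exists_isOpen_implicitFunction (hf : ∀ᶠ v in 𝓝 u, ContDiffAt 𝕜 n f v) {s : Set E₂}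
    (hs : s ∈ 𝓝 u.2) :
    ∃ A V, IsOpen A ∧ u.1 ∈ A ∧ IsOpen V ∧ V ⊆ s ∧ u.2 ∈ V ∧
      ContDiffOn 𝕜 n (cdf.implicitFunction pn if₂) A ∧
      ∀ a ∈ A, cdf.implicitFunction pn if₂ a ∈ V ∧
        ∀ b ∈ V, (f (a, b) = f u ↔ b = cdf.implicitFunction pn if₂ a) := by
  obtain ⟨A₁, V, hA₁, hu₁, hV, hu₂, hsub⟩ := mem_nhds_prod_iff'.1
    ((cdf.eventually_apply_eq_iff_implicitFunction pn if₂).and (prod_mem_nhds univ_mem hs))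
  obtain ⟨A₂, hA₂smooth, hA₂, hu₁'⟩ := eventually_nhds_iff.1
    (cdf.eventually_contDiffAt_implicitFunction pn if₂ hf)
  have hcont : ContinuousOn (cdf.implicitFunction pn if₂) (A₁ ∩ A₂) :=
    fun x hx => (hA₂smooth x hx.2).continuousAt.continuousWithinAt
  refine ⟨A₁ ∩ A₂ ∩ cdf.implicitFunction pn if₂ ⁻¹' V, V,
    hcont.isOpen_inter_preimage (hA₁.inter hA₂) hV, ⟨⟨hu₁, hu₁'⟩, ?_⟩, hV,
    fun b hb => (hsub (mk_mem_prod hu₁ hb)).2.2, hu₂,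
    fun x hx => (hA₂smooth x hx.1.2).contDiffWithinAt,
    fun a ha => ⟨ha.2, fun b hb => (hsub (mk_mem_prod ha.1.1 hb)).1.trans eq_comm⟩⟩
  rw [mem_preimage, cdf.implicitFunction_apply_self]
  exact hu₂

end ContDiffAt

theorem stmt_0_general {m n : ℕ}
    (U : Set (EuclideanSpace ℝ (Fin m))) (hU : IsOpen U)
    (ψ : EuclideanSpace ℝ (Fin m) → EuclideanSpace ℝ (Fin n))
    (hψ : ContDiffOn ℝ (⊤ : ℕ∞) ψ U)
    (u₀ : EuclideanSpace ℝ (Fin m)) (hu₀U : u₀ ∈ U)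
    (horth : (ContinuousLinearMap.adjoint (fderiv ℝ ψ u₀)).comp (fderiv ℝ ψ u₀) =
      ContinuousLinearMap.id ℝ (EuclideanSpace ℝ (Fin m)))
    (a₀ : EuclideanSpace ℝ (Fin n))
    (hcrit : ContinuousLinearMap.adjoint (fderiv ℝ ψ u₀) (a₀ - ψ u₀) = 0)
    (H Hinv : EuclideanSpace ℝ (Fin m) →L[ℝ] EuclideanSpace ℝ (Fin m))
    (hH : ∀ v w, ⟪H v, w⟫ =
      fderiv ℝ (fderiv ℝ (fun u => (1 / 2 : ℝ) * ‖a₀ - ψ u‖ ^ 2)) u₀ v w)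
    (hHinv₁ : H.comp Hinv = ContinuousLinearMap.id ℝ (EuclideanSpace ℝ (Fin m)))
    (hHinv₂ : Hinv.comp H = ContinuousLinearMap.id ℝ (EuclideanSpace ℝ (Fin m))) :
    ∃ (A : Set (EuclideanSpace ℝ (Fin n))) (U' : Set (EuclideanSpace ℝ (Fin m)))
      (σ : EuclideanSpace ℝ (Fin n) → EuclideanSpace ℝ (Fin m)),
      IsOpen A ∧ a₀ ∈ A ∧ IsOpen U' ∧ U' ⊆ U ∧ u₀ ∈ U' ∧
      ContDiffOn ℝ (⊤ : ℕ∞) σ A ∧ σ a₀ = u₀ ∧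
      (∀ a ∈ A, σ a ∈ U' ∧ ∀ u ∈ U',
        (ContinuousLinearMap.adjoint (fderiv ℝ ψ u) (a - ψ u) = 0 ↔ u = σ a)) ∧
      fderiv ℝ (fun a => ψ (σ a)) a₀ =
        ((fderiv ℝ ψ u₀).comp Hinv).comp (ContinuousLinearMap.adjoint (fderiv ℝ ψ u₀)) ∧
      Tendsto (fun ε : ℝ => sSup {q : ℝ | ∃ a ∈ A, 0 < ‖a - a₀‖ ∧ ‖a - a₀‖ ≤ ε ∧
          q = ‖ψ (σ a) - ψ (σ a₀)‖ / ‖a - a₀‖}) (𝓝[>] (0 : ℝ)) (𝓝 ‖Hinv‖) := by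
  have hFat : ∀ᶠ p in 𝓝 (a₀, u₀), ContDiffAt ℝ (⊤ : ℕ∞) (criticalEqn ψ) p :=
    eventually_contDiffAt_criticalEqn hU (hψ.of_le (by exact_mod_cast le_top)) a₀ hu₀U
  have hψat : ∀ᶠ u in 𝓝 u₀, DifferentiableAt ℝ ψ u :=
    eventually_of_mem (hU.mem_nhds hu₀U) fun u hu =>
      (hψ.contDiffAt (hU.mem_nhds hu)).differentiableAt (by simp)
  have cdf := hFat.self_of_nhds
  have pn : ((⊤ : ℕ∞) : WithTop ℕ∞) ≠ 0 := by simp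
  have hdiff := cdf.differentiableAt (by simp)
  have h₂ := fderiv_criticalEqn_comp_inr hψat hdiff hH
  have hHH : (-H) ∘L (-Hinv) = .id ℝ _ := by simpa using hHinv₁
  have hHH' : (-Hinv) ∘L (-H) = .id ℝ _ := by simpa using hHinv₂
  have if₂ : (fderiv ℝ (criticalEqn ψ) (a₀, u₀) ∘L .inr ℝ _ _).IsInvertible :=
    h₂ ▸ .of_inverse hHH hHH'
  obtain ⟨A, U', hA, ha₀, hU', hU'U, hu₀, hσ, hσcrit⟩ :=
    cdf.exists_isOpen_implicitFunction pn if₂ hFat (hU.mem_nhds hu₀U)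
  set σ := cdf.implicitFunction pn if₂
  have hσ' : HasFDerivAt σ (Hinv ∘L ContinuousLinearMap.adjoint (fderiv ℝ ψ u₀)) a₀ := by
    have := (cdf.hasStrictFDerivAt_implicitFunction pn if₂).hasFDerivAt
    rwa [h₂, fderiv_criticalEqn_comp_inl hdiff, ContinuousLinearMap.inverse_eq hHH hHH',
      ContinuousLinearMap.neg_comp, neg_neg] at this
  have hσa₀ : σ a₀ = u₀ := cdf.implicitFunction_apply_self pn if₂
  have hx : HasFDerivAt (fun a => ψ (σ a))
      (((fderiv ℝ ψ u₀).comp Hinv).comp (ContinuousLinearMap.adjoint (fderiv ℝ ψ u₀))) a₀ := by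
    have hψ₀ : HasFDerivAt ψ (fderiv ℝ ψ u₀) (σ a₀) := hσa₀ ▸ hψat.self_of_nhds.hasFDerivAt
    rw [ContinuousLinearMap.comp_assoc]
    exact hψ₀.comp a₀ hσ'
  refine ⟨A, U', σ, hA, ha₀, hU', hU'U, hu₀, hσ, hσa₀, ?_, hx.fderiv, ?_⟩
  · rwa [show criticalEqn ψ (a₀, u₀) = 0 from hcrit] at hσcrit
  · rw [← norm_comp_comp_adjoint_of_adjoint_comp_self horth Hinv]
    exact tendsto_sSup_diffQuotients hx (hA.mem_nhds ha₀)

/-- Chart formulation of Theorem 4.3 (condition number of the critical point problem):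
local existence, smoothness, derivative and Rice condition number of the critical-point map. -/
theorem stmt_0 {m n : ℕ} (hmn : m ≤ n)
    (U : Set (EuclideanSpace ℝ (Fin m))) (hU : IsOpen U)
    (ψ : EuclideanSpace ℝ (Fin m) → EuclideanSpace ℝ (Fin n))
    (hψ : ContDiffOn ℝ (⊤ : ℕ∞) ψ U)
    (hinj : ∀ u ∈ U, Function.Injective (fderiv ℝ ψ u))
    (u₀ : EuclideanSpace ℝ (Fin m)) (hu₀U : u₀ ∈ U)
    (horth : (ContinuousLinearMap.adjoint (fderiv ℝ ψ u₀)).comp (fderiv ℝ ψ u₀) =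
      ContinuousLinearMap.id ℝ (EuclideanSpace ℝ (Fin m)))
    (a₀ : EuclideanSpace ℝ (Fin n))
    (hcrit : ContinuousLinearMap.adjoint (fderiv ℝ ψ u₀) (a₀ - ψ u₀) = 0)
    (H Hinv : EuclideanSpace ℝ (Fin m) →L[ℝ] EuclideanSpace ℝ (Fin m))
    (hH : ∀ v w, ⟪H v, w⟫ =
      fderiv ℝ (fderiv ℝ (fun u => (1 / 2 : ℝ) * ‖a₀ - ψ u‖ ^ 2)) u₀ v w)
    (hHinv₁ : H.comp Hinv = ContinuousLinearMap.id ℝ (EuclideanSpace ℝ (Fin m)))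
    (hHinv₂ : Hinv.comp H = ContinuousLinearMap.id ℝ (EuclideanSpace ℝ (Fin m))) :
    ∃ (A : Set (EuclideanSpace ℝ (Fin n))) (U' : Set (EuclideanSpace ℝ (Fin m)))
      (σ : EuclideanSpace ℝ (Fin n) → EuclideanSpace ℝ (Fin m)),
      IsOpen A ∧ a₀ ∈ A ∧ IsOpen U' ∧ U' ⊆ U ∧ u₀ ∈ U' ∧
      ContDiffOn ℝ (⊤ : ℕ∞) σ A ∧ σ a₀ = u₀ ∧
      (∀ a ∈ A, σ a ∈ U' ∧ ∀ u ∈ U',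
        (ContinuousLinearMap.adjoint (fderiv ℝ ψ u) (a - ψ u) = 0 ↔ u = σ a)) ∧
      fderiv ℝ (fun a => ψ (σ a)) a₀ =
        ((fderiv ℝ ψ u₀).comp Hinv).comp (ContinuousLinearMap.adjoint (fderiv ℝ ψ u₀)) ∧
      Tendsto (fun ε : ℝ => sSup {q : ℝ | ∃ a ∈ A, 0 < ‖a - a₀‖ ∧ ‖a - a₀‖ ≤ ε ∧
          q = ‖ψ (σ a) - ψ (σ a₀)‖ / ‖a - a₀‖}) (𝓝[>] (0 : ℝ)) (𝓝 ‖Hinv‖) :=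
  stmt_0_general U hU ψ hψ u₀ hu₀U horth a₀ hcrit H Hinv hH hHinv₁ hHinv₂
end

section
/- Let F : W → ℝⁿ be a C^∞ map on an open set W ⊆ ℝᵐ, let a₀ ∈ ℝⁿ, and let y₀ ∈ W be a local minimizer of f_{a₀}(y) := ½‖a₀ − F(y)‖² such that the Hessian of f_{a₀} at y₀ is invertible. Then there exist open neighborhoods A ⊆ ℝⁿ of a₀ and Y ⊆ W of y₀ with compact closure cl(Y) ⊆ W, and a C^∞ map g : A → Y with g(a₀) = y₀, such that for every a ∈ A the function f_a(y) := ½‖a − F(y)‖² attains its minimum over cl(Y) at the unique point g(a) (which lies in the open set Y), and g(a) is the only critical point of f_a in Y. -/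
/-!
A nondegenerate local minimum has a positive definite Hessian: it is positive semidefinite by the
second-order necessary condition, and a symmetric semidefinite form that is injective is definite.
Positive definiteness of the partial Hessian in `y` persists on a product neighbourhood
`N × closedBall y₀ ρ`, and there each `f a` is strictly convex along segments, so a critical point
in the ball is the strict minimizer of `f a` on the ball and its only critical point there. The
implicit function theorem for the partial gradient gives a smooth curve `g` of critical points
through `(a₀, y₀)`; smoothness at the other points `a` comes from applying it again at `(a, g a)`
and using this uniqueness.
-/

open Filter Topology
open scoped RealInnerProductSpace

noncomputable section

open Set Metric
open scoped ContDiff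

section PosDef

variable {E : Type*} [NormedAddCommGroup E] [NormedSpace ℝ E]

def IsPosDefForm (B : E →L[ℝ] E →L[ℝ] ℝ) : Prop :=
  ∀ v, v ≠ 0 → 0 < B v v

theorem isPosDefForm_of_nonneg_of_injective {B : E →L[ℝ] E →L[ℝ] ℝ}
    (hsymm : ∀ v w, B v w = B w v) (hnonneg : ∀ v, 0 ≤ B v v) (hinj : Function.Injective B) :
    IsPosDefForm B := by
  intro v hv
  refine (hnonneg v).lt_of_ne fun hvv => hv (hinj ?_)
  ext w
  -- `t ↦ B (v + t w) (v + t w) = 2 t B v w + t² B w w` is nonnegative, which forces `B v w = 0`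
  have hquad : ∀ t : ℝ, 0 ≤ B w w * (t * t) + 2 * B v w * t + 0 := fun t => by
    have := hnonneg (v + t • w)
    simp only [map_add, map_smul, add_apply, FunLike.coe_smul,
      Pi.smul_apply, smul_eq_mul, hvv, hsymm w v] at this
    linarith
  have := discrim_le_zero hquad
  rw [discrim] at this
  simpa using (show B v w = 0 by nlinarith [sq_nonneg (B v w)])

theorem IsPosDefForm.eventually_nhds [FiniteDimensional ℝ E] {B : E →L[ℝ] E →L[ℝ] ℝ}
    (hB : IsPosDefForm B) : ∀ᶠ B' in 𝓝 B, IsPosDefForm B' := by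
  have hsphere : ∀ᶠ B' in 𝓝 B, ∀ u ∈ sphere (0 : E) 1, 0 < B' u u := by
    refine (isCompact_sphere 0 1).eventually_forall_of_forall_eventually fun u hu => ?_
    have hcont : Continuous fun p : (E →L[ℝ] E →L[ℝ] ℝ) × E => p.1 p.2 p.2 := by fun_prop
    exact continuousAt_const.eventually_lt hcont.continuousAt
      (hB u (ne_zero_of_mem_unit_sphere ⟨u, hu⟩))
  filter_upwards [hsphere] with B' hB' v hv
  have hu : ‖v‖⁻¹ • v ∈ sphere (0 : E) 1 := by simp [norm_smul, hv]
  have := hB' _ hu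
  simp only [map_smul, FunLike.coe_smul, Pi.smul_apply, smul_eq_mul] at this
  have hn : 0 ≤ ‖v‖⁻¹ := by positivity
  exact pos_of_mul_pos_right (pos_of_mul_pos_right this hn) hn

end PosDef

section SecondOrder

variable {E : Type*} [NormedAddCommGroup E] [NormedSpace ℝ E]

theorem IsLocalMin.fderiv_fderiv_apply_self_nonneg {f : E → ℝ} {x : E}
    (hmin : IsLocalMin f x) (hd : ∀ᶠ y in 𝓝 x, DifferentiableAt ℝ f y)
    (hd2 : DifferentiableAt ℝ (fderiv ℝ f) x) (v : E) :
    0 ≤ fderiv ℝ (fderiv ℝ f) x v v := by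
  set γ : ℝ → E := fun t => x + t • v
  have hγ : ∀ t, HasDerivAt γ v t := fun t =>
    HasDerivAt.const_add x (by simpa using (hasDerivAt_id t).smul_const v)
  have hγ0 : γ 0 = x := by simp [γ]
  have hγt : Tendsto γ (𝓝 0) (𝓝 x) := hγ0 ▸ (hγ 0).continuousAt.tendsto
  have hderiv : deriv (fun t => f (γ t)) =ᶠ[𝓝 0] fun t => fderiv ℝ f (γ t) v := by
    filter_upwards [hγt.eventually hd] with t ht
    exact (ht.hasFDerivAt.comp_hasDerivAt t (hγ t)).deriv
  have hderiv2 : deriv (deriv fun t => f (γ t)) 0 = fderiv ℝ (fderiv ℝ f) x v v := by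
    rw [hderiv.deriv_eq]
    have := (hγ0 ▸ hd2.hasFDerivAt).comp_hasDerivAt 0 (hγ 0)
    exact ((ContinuousLinearMap.apply ℝ ℝ v).hasFDerivAt.comp_hasDerivAt 0 this).deriv.trans
      (by rw [hγ0]; rfl)
  have hmin' : IsLocalMin (fun t => f (γ t)) 0 := by
    simpa [IsLocalMin, IsMinFilter, hγ0] using hγt.eventually hmin
  by_contra! hneg
  -- the second-derivative test makes `0` also a local maximum, so `f ∘ γ` is locally constant
  have hmax : IsLocalMax (fun t => f (γ t)) 0 :=
    isLocalMax_of_deriv_deriv_neg (hderiv2 ▸ hneg) hmin'.deriv_eq_zero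
      ((hγ0 ▸ hd.self_of_nhds.continuousAt).comp (hγ 0).continuousAt)
  have hconst : (fun t => f (γ t)) =ᶠ[𝓝 0] fun _ => f (γ 0) := by
    filter_upwards [hmin', hmax] with t h1 h2 using le_antisymm h2 h1
  have : deriv (deriv fun t => f (γ t)) 0 = 0 := by
    rw [hconst.deriv.deriv_eq]
    simp
  linarith

theorem IsLocalMin.isPosDefForm_fderiv_fderiv {f : E → ℝ} {x : E}
    (hmin : IsLocalMin f x) (hd : ∀ᶠ y in 𝓝 x, DifferentiableAt ℝ f y)
    (hd2 : DifferentiableAt ℝ (fderiv ℝ f) x) (hinv : (fderiv ℝ (fderiv ℝ f) x).IsInvertible) :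
    IsPosDefForm (fderiv ℝ (fderiv ℝ f) x) := by
  obtain ⟨e, he⟩ := hinv
  refine isPosDefForm_of_nonneg_of_injective
    (second_derivative_symmetric_of_eventually (hd.mono fun y hy => hy.hasFDerivAt)
      hd2.hasFDerivAt) (hmin.fderiv_fderiv_apply_self_nonneg hd hd2) ?_
  exact he ▸ e.injective

end SecondOrder

section Segment

variable {E : Type*} [NormedAddCommGroup E] [NormedSpace ℝ E] {s : Set E} {f : E → ℝ}
  {f' : E → E →L[ℝ] ℝ} {f'' : E → E →L[ℝ] E →L[ℝ] ℝ} {x y : E}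

theorem Convex.strictMonoOn_fderiv_lineMap (hs : Convex ℝ s)
    (hf' : ∀ z ∈ s, HasFDerivAt f' (f'' z) z) (hpos : ∀ z ∈ s, IsPosDefForm (f'' z))
    (hx : x ∈ s) (hy : y ∈ s) (hxy : y ≠ x) :
    StrictMonoOn (fun t : ℝ => f' (AffineMap.lineMap x y t) (y - x)) (Icc 0 1) := by
  have hmem := hs.mapsTo_lineMap hx hy
  have hderiv : ∀ t ∈ Icc (0 : ℝ) 1, HasDerivAt (fun t : ℝ => f' (AffineMap.lineMap x y t) (y - x))
      (f'' (AffineMap.lineMap x y t) (y - x) (y - x)) t := fun t ht =>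
    (ContinuousLinearMap.apply ℝ ℝ (y - x)).hasFDerivAt.comp_hasDerivAt t
      ((hf' _ (hmem ht)).comp_hasDerivAt t AffineMap.hasDerivAt_lineMap)
  refine strictMonoOn_of_deriv_pos (convex_Icc 0 1)
    (fun t ht => (hderiv t ht).continuousAt.continuousWithinAt) fun t ht => ?_
  rw [interior_Icc] at ht
  rw [(hderiv t (Ioo_subset_Icc_self ht)).deriv]
  exact hpos _ (hmem (Ioo_subset_Icc_self ht)) _ (sub_ne_zero.2 hxy)

theorem Convex.fderiv_ne_zero_of_isPosDefForm (hs : Convex ℝ s)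
    (hf' : ∀ z ∈ s, HasFDerivAt f' (f'' z) z) (hpos : ∀ z ∈ s, IsPosDefForm (f'' z))
    (hx : x ∈ s) (hy : y ∈ s) (hxy : y ≠ x) (hcrit : f' x = 0) : f' y ≠ 0 := by
  intro hy0
  have := hs.strictMonoOn_fderiv_lineMap hf' hpos hx hy hxy (left_mem_Icc.2 zero_le_one)
    (right_mem_Icc.2 zero_le_one) zero_lt_one
  simp [hcrit, hy0] at this

theorem Convex.lt_of_isPosDefForm (hs : Convex ℝ s) (hf : ∀ z ∈ s, HasFDerivAt f (f' z) z)
    (hf' : ∀ z ∈ s, HasFDerivAt f' (f'' z) z) (hpos : ∀ z ∈ s, IsPosDefForm (f'' z))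
    (hx : x ∈ s) (hy : y ∈ s) (hxy : y ≠ x) (hcrit : f' x = 0) : f x < f y := by
  have hmono := hs.strictMonoOn_fderiv_lineMap hf' hpos hx hy hxy
  have hmem := hs.mapsTo_lineMap hx hy
  have hderiv : ∀ t ∈ Icc (0 : ℝ) 1, HasDerivAt (fun t : ℝ => f (AffineMap.lineMap x y t))
      (f' (AffineMap.lineMap x y t) (y - x)) t := fun t ht =>
    (hf _ (hmem ht)).comp_hasDerivAt t AffineMap.hasDerivAt_lineMap
  have hstrict : StrictMonoOn (fun t : ℝ => f (AffineMap.lineMap x y t)) (Icc 0 1) := by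
    refine strictMonoOn_of_deriv_pos (convex_Icc 0 1)
      (fun t ht => (hderiv t ht).continuousAt.continuousWithinAt) fun t ht => ?_
    rw [interior_Icc] at ht
    rw [(hderiv t (Ioo_subset_Icc_self ht)).deriv]
    simpa [hcrit] using hmono (left_mem_Icc.2 zero_le_one) (Ioo_subset_Icc_self ht) ht.1
  simpa using hstrict (left_mem_Icc.2 zero_le_one) (right_mem_Icc.2 zero_le_one) zero_lt_one

end Segment

section Parametric

variable {P E : Type*} [NormedAddCommGroup P] [NormedSpace ℝ P]
  [NormedAddCommGroup E] [NormedSpace ℝ E]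

def partialFDeriv (f : P → E → ℝ) (p : P × E) : E →L[ℝ] ℝ :=
  fderiv ℝ (f p.1) p.2

def partialHessian (f : P → E → ℝ) (p : P × E) : E →L[ℝ] E →L[ℝ] ℝ :=
  (fderiv ℝ (partialFDeriv f) p).comp (ContinuousLinearMap.inr ℝ P E)

variable {f : P → E → ℝ} {W : Set E}

theorem contDiffAt_partialFDeriv (hW : IsOpen W)
    (hf : ContDiffOn ℝ ∞ (Function.uncurry f) (univ ×ˢ W)) {p : P × E} (hp : p.2 ∈ W) :
    ContDiffAt ℝ ∞ (partialFDeriv f) p := by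
  have hfp : ContDiffAt ℝ ∞ (Function.uncurry f) p :=
    hf.contDiffAt ((isOpen_univ.prod hW).mem_nhds ⟨trivial, hp⟩)
  exact ContDiffAt.fderiv (f := fun q : P × E => f q.1) (g := Prod.snd)
    (hfp.comp (p, p.2) (by fun_prop : ContDiffAt ℝ ∞ (fun q : (P × E) × E => (q.1.1, q.2))
      (p, p.2))) contDiffAt_snd le_rfl

theorem hasFDerivAt_of_contDiffOn_uncurry (hW : IsOpen W)
    (hf : ContDiffOn ℝ ∞ (Function.uncurry f) (univ ×ˢ W)) (a : P) {y : E} (hy : y ∈ W) :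
    HasFDerivAt (f a) (partialFDeriv f (a, y)) y := by
  have hfp : ContDiffAt ℝ ∞ (Function.uncurry f) (a, y) :=
    hf.contDiffAt ((isOpen_univ.prod hW).mem_nhds ⟨trivial, hy⟩)
  exact ((hfp.comp y (by fun_prop : ContDiffAt ℝ ∞ (fun z : E => (a, z)) y)).differentiableAt
    (by simp)).hasFDerivAt

theorem hasFDerivAt_fderiv_of_contDiffOn_uncurry (hW : IsOpen W)
    (hf : ContDiffOn ℝ ∞ (Function.uncurry f) (univ ×ˢ W)) (a : P) {y : E} (hy : y ∈ W) :
    HasFDerivAt (fderiv ℝ (f a)) (partialHessian f (a, y)) y :=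
  ((contDiffAt_partialFDeriv hW hf (p := (a, y)) hy).differentiableAt (by simp)).hasFDerivAt.comp
    y (hasFDerivAt_prodMk_right a y)

theorem continuousOn_partialHessian (hW : IsOpen W)
    (hf : ContDiffOn ℝ ∞ (Function.uncurry f) (univ ×ˢ W)) :
    ContinuousOn (partialHessian f) (univ ×ˢ W) := fun p hp =>
  (((contDiffAt_partialFDeriv hW hf hp.2).fderiv_right (m := 0) (by simp)).continuousAt.clm_comp
    continuousAt_const).continuousWithinAt

theorem lt_of_isPosDefForm_partialHessian (hW : IsOpen W)
    (hf : ContDiffOn ℝ ∞ (Function.uncurry f) (univ ×ˢ W)) {s : Set E} (hs : Convex ℝ s)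
    (hsW : s ⊆ W) {a : P} (hpos : ∀ z ∈ s, IsPosDefForm (partialHessian f (a, z))) {x y : E}
    (hx : x ∈ s) (hy : y ∈ s) (hxy : y ≠ x) (hcrit : fderiv ℝ (f a) x = 0) : f a x < f a y :=
  hs.lt_of_isPosDefForm (fun _ hz => hasFDerivAt_of_contDiffOn_uncurry hW hf a (hsW hz))
    (fun _ hz => hasFDerivAt_fderiv_of_contDiffOn_uncurry hW hf a (hsW hz)) hpos hx hy hxy hcrit

theorem eq_of_isPosDefForm_partialHessian (hW : IsOpen W)
    (hf : ContDiffOn ℝ ∞ (Function.uncurry f) (univ ×ˢ W)) {s : Set E} (hs : Convex ℝ s)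
    (hsW : s ⊆ W) {a : P} (hpos : ∀ z ∈ s, IsPosDefForm (partialHessian f (a, z))) {x y : E}
    (hx : x ∈ s) (hy : y ∈ s) (hcrit : fderiv ℝ (f a) x = 0) (hcrit' : fderiv ℝ (f a) y = 0) :
    y = x :=
  by_contra fun hxy => hs.fderiv_ne_zero_of_isPosDefForm
    (fun _ hz => hasFDerivAt_fderiv_of_contDiffOn_uncurry hW hf a (hsW hz)) hpos hx hy hxy hcrit
    hcrit'

theorem exists_closedBall_eventually_isPosDefForm [FiniteDimensional ℝ E] (hW : IsOpen W)
    (hf : ContDiffOn ℝ ∞ (Function.uncurry f) (univ ×ˢ W)) {a₀ : P} {y₀ : E} (hy₀ : y₀ ∈ W)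
    (hpos : IsPosDefForm (partialHessian f (a₀, y₀)))
    (hinv : (partialHessian f (a₀, y₀)).IsInvertible) :
    ∃ ρ > 0, closedBall y₀ ρ ⊆ W ∧ ∀ᶠ a in 𝓝 a₀, ∀ z ∈ closedBall y₀ ρ,
      IsPosDefForm (partialHessian f (a, z)) ∧ (partialHessian f (a, z)).IsInvertible := by
  have hgood : ∀ᶠ p in 𝓝 (a₀, y₀), p.2 ∈ W ∧ IsPosDefForm (partialHessian f p) ∧
      (partialHessian f p).IsInvertible := by
    have hcont := (continuousOn_partialHessian hW hf).continuousAt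
      ((isOpen_univ.prod hW).mem_nhds (mk_mem_prod (mem_univ a₀) hy₀))
    have hopen : IsOpen {T : E →L[ℝ] E →L[ℝ] ℝ | T.IsInvertible} := ContinuousLinearEquiv.isOpen
    exact (continuousAt_snd.eventually_mem (hW.mem_nhds hy₀)).and
      ((hcont.eventually hpos.eventually_nhds).and (hcont.eventually_mem (hopen.mem_nhds hinv)))
  rw [nhds_prod_eq] at hgood
  obtain ⟨Na, hNa, Ny, hNy, hN⟩ := eventually_prod_iff.1 hgood
  obtain ⟨ρ, hρ, hρNy⟩ := Metric.nhds_basis_closedBall.eventually_iff.1 hNy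
  exact ⟨ρ, hρ, fun z hz => (hN hNa.self_of_nhds (hρNy hz)).1,
    hNa.mono fun a ha z hz => (hN ha (hρNy hz)).2⟩

end Parametric

section Minimizer

variable {P E : Type*} [NormedAddCommGroup P] [NormedSpace ℝ P] [CompleteSpace P]
  [NormedAddCommGroup E] [NormedSpace ℝ E] {f : P → E → ℝ}

theorem exists_contDiffAt_fderiv_eq_zero [CompleteSpace E] {p : P × E}
    (hp : ContDiffAt ℝ ∞ (partialFDeriv f) p) (hcrit : partialFDeriv f p = 0)
    (hinv : (partialHessian f p).IsInvertible) :
    ∃ h : P → E, h p.1 = p.2 ∧ ContDiffAt ℝ ∞ h p.1 ∧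
      ∀ᶠ a in 𝓝 p.1, fderiv ℝ (f a) (h a) = 0 :=
  ⟨hp.implicitFunction (by simp) hinv, hp.implicitFunction_apply_self _ _,
    hp.contDiffAt_implicitFunction _ _,
    hcrit ▸ hp.eventually_apply_implicitFunction (by simp) hinv⟩

theorem exists_contDiffOn_unique_minimizer [FiniteDimensional ℝ E] {W : Set E} (hW : IsOpen W)
    (hf : ContDiffOn ℝ ∞ (Function.uncurry f) (univ ×ˢ W)) {a₀ : P} {y₀ : E} (hy₀ : y₀ ∈ W)
    (hmin : IsLocalMin (f a₀) y₀) (hinv : (fderiv ℝ (fderiv ℝ (f a₀)) y₀).IsInvertible) :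
    ∃ (A : Set P) (Y : Set E) (g : P → E),
      IsOpen A ∧ a₀ ∈ A ∧ IsOpen Y ∧ y₀ ∈ Y ∧
      IsCompact (closure Y) ∧ closure Y ⊆ W ∧
      ContDiffOn ℝ ∞ g A ∧ g a₀ = y₀ ∧
      ∀ a ∈ A, g a ∈ Y ∧
        (∀ y ∈ closure Y, y ≠ g a → f a (g a) < f a y) ∧
        (∀ y ∈ Y, fderiv ℝ (f a) y = 0 → y = g a) := by
  have hHess := hasFDerivAt_fderiv_of_contDiffOn_uncurry hW hf a₀ hy₀
  have hHess₀ : partialHessian f (a₀, y₀) = fderiv ℝ (fderiv ℝ (f a₀)) y₀ := hHess.fderiv.symm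
  have hpos₀ : IsPosDefForm (partialHessian f (a₀, y₀)) := hHess₀ ▸
    hmin.isPosDefForm_fderiv_fderiv (eventually_of_mem (hW.mem_nhds hy₀) fun y hy =>
      (hasFDerivAt_of_contDiffOn_uncurry hW hf a₀ hy).differentiableAt) hHess.differentiableAt hinv
  obtain ⟨ρ, hρ, hKW, hgood⟩ :=
    exists_closedBall_eventually_isPosDefForm hW hf hy₀ hpos₀ (hHess₀ ▸ hinv)
  set Good : P → Prop := fun a => ∀ z ∈ closedBall y₀ ρ,
    IsPosDefForm (partialHessian f (a, z)) ∧ (partialHessian f (a, z)).IsInvertible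
  have huniq : ∀ {a}, Good a → ∀ x ∈ closedBall y₀ ρ, fderiv ℝ (f a) x = 0 →
      ∀ y ∈ closedBall y₀ ρ, fderiv ℝ (f a) y = 0 → y = x := fun ha _ hx hcrit _ hy hcrit' =>
    eq_of_isPosDefForm_partialHessian hW hf (convex_closedBall y₀ ρ) hKW (fun z hz => (ha z hz).1)
      hx hy hcrit hcrit'
  obtain ⟨g, hg₀, hg_smooth, hg_crit⟩ := exists_contDiffAt_fderiv_eq_zero
    (contDiffAt_partialFDeriv hW hf (p := (a₀, y₀)) hy₀) hmin.fderiv_eq_zero (hHess₀ ▸ hinv)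
  dsimp only at hg₀ hg_smooth hg_crit
  have hA : ∀ᶠ a in 𝓝 a₀, Good a ∧ g a ∈ ball y₀ ρ ∧ fderiv ℝ (f a) (g a) = 0 :=
    hgood.and ((hg_smooth.continuousAt.eventually_mem
      (isOpen_ball.mem_nhds (hg₀ ▸ mem_ball_self hρ))).and hg_crit)
  obtain ⟨A, hAsub, hAopen, ha₀⟩ := _root_.mem_nhds_iff.1 hA
  have hclosure : closure (ball y₀ ρ) = closedBall y₀ ρ := closure_ball y₀ hρ.ne'
  refine ⟨A, ball y₀ ρ, g, hAopen, ha₀, isOpen_ball, mem_ball_self hρ,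
    hclosure ▸ isCompact_closedBall y₀ ρ, hclosure ▸ hKW, ?_, hg₀, ?_⟩
  · -- near each `a ∈ A`, the implicit function through `(a, g a)` is a critical point in the ball,
    -- so by uniqueness it coincides with `g`
    intro a ha
    obtain ⟨hGood, hgY, hgcrit⟩ := hAsub ha
    have hgK := ball_subset_closedBall hgY
    obtain ⟨h, hh, hh_smooth, hh_crit⟩ := exists_contDiffAt_fderiv_eq_zero (p := (a, g a))
      (contDiffAt_partialFDeriv hW hf (hKW hgK)) hgcrit (hGood _ hgK).2
    dsimp only at hh hh_smooth hh_crit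
    refine (hh_smooth.congr_of_eventuallyEq ?_).contDiffWithinAt
    filter_upwards [hAopen.mem_nhds ha, hh_crit,
      hh_smooth.continuousAt.eventually_mem (isOpen_ball.mem_nhds (hh ▸ hgY))] with a' ha' hcrit hY
    obtain ⟨hGood', hgY', hgcrit'⟩ := hAsub ha'
    exact huniq hGood' _ (ball_subset_closedBall hY) hcrit _ (ball_subset_closedBall hgY') hgcrit'
  intro a ha
  obtain ⟨hGood, hgY, hgcrit⟩ := hAsub ha
  rw [hclosure]
  exact ⟨hgY, fun y hy hne => lt_of_isPosDefForm_partialHessian hW hf (convex_closedBall y₀ ρ)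
      hKW (fun z hz => (hGood z hz).1) (ball_subset_closedBall hgY) hy hne hgcrit,
    fun y hy hcrit => huniq hGood _ (ball_subset_closedBall hgY) hgcrit _
      (ball_subset_closedBall hy) hcrit⟩

end Minimizer

theorem isInvertible_of_inner_apply_eq {E : Type*} [NormedAddCommGroup E] [InnerProductSpace ℝ E]
    [CompleteSpace E] {H : E →L[ℝ] E} {B : E →L[ℝ] E →L[ℝ] ℝ} (hH : H.IsInvertible)
    (hB : ∀ v w, ⟪H v, w⟫ = B v w) : B.IsInvertible := by
  have : B = (InnerProductSpace.toDual ℝ E).toContinuousLinearEquiv.toContinuousLinearMap ∘L H := by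
    ext v w
    simp [hB]
  exact this ▸ ContinuousLinearMap.isInvertible_equiv.comp hH

/-- Chart formulation of Theorem 7.2 (condition of local minimizers): a nondegenerate local
minimizer of a least-squares problem extends to a localized approximation problem with a unique,
smoothly varying global minimizer. -/
theorem stmt_2 {m n : ℕ}
    (W : Set (EuclideanSpace ℝ (Fin m))) (hW : IsOpen W)
    (F : EuclideanSpace ℝ (Fin m) → EuclideanSpace ℝ (Fin n))
    (hF : ContDiffOn ℝ (⊤ : ℕ∞) F W)
    (a₀ : EuclideanSpace ℝ (Fin n))
    (y₀ : EuclideanSpace ℝ (Fin m)) (hy₀ : y₀ ∈ W)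
    (hmin : IsLocalMin (fun y => (1 / 2 : ℝ) * ‖a₀ - F y‖ ^ 2) y₀)
    (H Hinv : EuclideanSpace ℝ (Fin m) →L[ℝ] EuclideanSpace ℝ (Fin m))
    (hH : ∀ v w, ⟪H v, w⟫ =
      fderiv ℝ (fderiv ℝ (fun y => (1 / 2 : ℝ) * ‖a₀ - F y‖ ^ 2)) y₀ v w)
    (hHinv₁ : H.comp Hinv = ContinuousLinearMap.id ℝ (EuclideanSpace ℝ (Fin m)))
    (hHinv₂ : Hinv.comp H = ContinuousLinearMap.id ℝ (EuclideanSpace ℝ (Fin m))) :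
    ∃ (A : Set (EuclideanSpace ℝ (Fin n))) (Y : Set (EuclideanSpace ℝ (Fin m)))
      (g : EuclideanSpace ℝ (Fin n) → EuclideanSpace ℝ (Fin m)),
      IsOpen A ∧ a₀ ∈ A ∧ IsOpen Y ∧ y₀ ∈ Y ∧
      IsCompact (closure Y) ∧ closure Y ⊆ W ∧
      ContDiffOn ℝ (⊤ : ℕ∞) g A ∧ g a₀ = y₀ ∧
      ∀ a ∈ A, g a ∈ Y ∧
        (∀ y ∈ closure Y, y ≠ g a →
          (1 / 2 : ℝ) * ‖a - F (g a)‖ ^ 2 < (1 / 2 : ℝ) * ‖a - F y‖ ^ 2) ∧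
        (∀ y ∈ Y, fderiv ℝ (fun z => (1 / 2 : ℝ) * ‖a - F z‖ ^ 2) y = 0 → y = g a) := by
  have hf : ContDiffOn ℝ ∞ (Function.uncurry fun a y => (1 / 2 : ℝ) * ‖a - F y‖ ^ 2)
      (univ ×ˢ W) :=
    contDiffOn_const.mul ((contDiff_norm_sq ℝ).comp_contDiffOn
      (contDiffOn_fst.sub (hF.comp contDiffOn_snd fun p hp => hp.2)))
  exact exists_contDiffOn_unique_minimizer hW hf hy₀ hmin
    (isInvertible_of_inner_apply_eq (.of_inverse hHinv₁ hHinv₂) hH)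
end
end

section
/- Let F : W → ℝⁿ be a C^∞ map on an open set W ⊆ ℝᵐ, let a₀ ∈ ℝⁿ, let y₀ ∈ W be a local minimizer of f_{a₀}(y) := ½‖a₀ − F(y)‖² whose Hessian H at y₀ is invertible, and let A ∋ a₀, Y ∋ y₀ and g : A → Y be as in the localized minimizer theorem (g(a) is the unique minimizer of f_a over cl(Y) and g(a₀) = y₀). Let χ : W → ℝᵖ be any C^∞ map. Then g is differentiable at a₀ with Dg(a₀) = H⁻¹ DF(y₀)ᵀ, and the output map ρ := χ ∘ g satisfies lim_{ε→0⁺} sup{ ‖ρ(a) − ρ(a₀)‖/‖a − a₀‖ : a ∈ A, 0 < ‖a − a₀‖ ≤ ε } = ‖Dχ(y₀) H⁻¹ DF(y₀)ᵀ‖. -/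
/-!
A minimizer `g a` of `½‖a - F y‖²` lying in the open set `Y` satisfies the normal equation
`DF(y)ᵀ (F y - a) = 0`, and uniqueness of the minimizer over the compact set `cl Y` makes `g`
continuous. The normal-equation map has partial derivative `-DF(y₀)ᵀ` in `a` and the Hessian `H`
in `y`, so the implicit function theorem identifies `g` near `a₀` with a smooth map and gives
`Dg(a₀) = H⁻¹ DF(y₀)ᵀ`. Rice's condition number of any map differentiable at `a₀` is the operator
norm of its derivative; applied to `χ ∘ g` this is `‖Dχ(y₀) H⁻¹ DF(y₀)ᵀ‖`.
-/

open Filter Topology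
open scoped RealInnerProductSpace

noncomputable section

section Rice

variable {E F : Type*} [NormedAddCommGroup E] [NormedSpace ℝ E]
  [NormedAddCommGroup F] [NormedSpace ℝ F]

def riceQuotients (A : Set E) (a₀ : E) (h : E → F) (ε : ℝ) : Set ℝ :=
  {q : ℝ | ∃ a ∈ A, 0 < ‖a - a₀‖ ∧ ‖a - a₀‖ ≤ ε ∧ q = ‖h a - h a₀‖ / ‖a - a₀‖}

variable {A : Set E} {a₀ : E} {h : E → F} {L : E →L[ℝ] F} {r δ ε : ℝ}

lemma le_of_mem_riceQuotients
    (hlin : ∀ a ∈ Metric.ball a₀ r, ‖h a - h a₀ - L (a - a₀)‖ ≤ δ * ‖a - a₀‖) (hεr : ε < r)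
    {q : ℝ} (hq : q ∈ riceQuotients A a₀ h ε) : q ≤ ‖L‖ + δ := by
  obtain ⟨a, -, hpos, hle, rfl⟩ := hq
  have ha : a ∈ Metric.ball a₀ r := by rw [Metric.mem_ball, dist_eq_norm]; linarith
  rw [div_le_iff₀ hpos]
  calc ‖h a - h a₀‖ ≤ ‖L (a - a₀)‖ + ‖h a - h a₀ - L (a - a₀)‖ := norm_le_insert' _ _
    _ ≤ ‖L‖ * ‖a - a₀‖ + δ * ‖a - a₀‖ := add_le_add (L.le_opNorm _) (hlin a ha)
    _ = (‖L‖ + δ) * ‖a - a₀‖ := by ring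

lemma sub_le_sSup_riceQuotients (hδ : 0 ≤ δ) (hA : Metric.ball a₀ r ⊆ A)
    (hlin : ∀ a ∈ Metric.ball a₀ r, ‖h a - h a₀ - L (a - a₀)‖ ≤ δ * ‖a - a₀‖)
    (hε : ε ∈ Set.Ioo 0 r) : ‖L‖ - δ ≤ sSup (riceQuotients A a₀ h ε) := by
  refine le_of_forall_lt fun c hc => ?_
  rcases lt_or_ge c 0 with hc0 | hc0
  · exact hc0.trans_le (Real.sSup_nonneg (by rintro q ⟨a, _, _, _, rfl⟩; positivity))
  obtain ⟨x, hx1, hLx⟩ := L.exists_lt_apply_of_lt_opNorm (show c + δ < ‖L‖ by linarith)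
  have hx0 : 0 < ‖x‖ := norm_pos_iff.2 fun hx => by simp [hx] at hLx; linarith
  set a := a₀ + ε • x
  have hda : ‖a - a₀‖ = ε * ‖x‖ := by
    rw [add_sub_cancel_left, norm_smul, Real.norm_of_nonneg hε.1.le]
  have hpos : 0 < ‖a - a₀‖ := by rw [hda]; exact mul_pos hε.1 hx0
  have hle : ‖a - a₀‖ ≤ ε := by rw [hda]; nlinarith [hε.1]
  have hball : a ∈ Metric.ball a₀ r := by rw [Metric.mem_ball, dist_eq_norm]; linarith [hε.2]
  have hLa : ‖a - a₀‖ * ‖L x‖ ≤ ‖L (a - a₀)‖ := by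
    rw [hda, add_sub_cancel_left, map_smul, norm_smul, Real.norm_of_nonneg hε.1.le]
    nlinarith [hε.1, norm_nonneg (L x)]
  have hq : ‖h a - h a₀‖ / ‖a - a₀‖ ∈ riceQuotients A a₀ h ε := ⟨a, hA hball, hpos, hle, rfl⟩
  have hbdd : BddAbove (riceQuotients A a₀ h ε) :=
    ⟨‖L‖ + δ, fun q hq => le_of_mem_riceQuotients hlin hε.2 hq⟩
  refine lt_of_lt_of_le ?_ (le_csSup hbdd hq)
  rw [lt_div_iff₀ hpos]
  have := norm_sub_norm_le (L (a - a₀)) (L (a - a₀) - (h a - h a₀))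
  rw [sub_sub_cancel, norm_sub_rev] at this
  nlinarith [hlin a hball]

theorem tendsto_sSup_riceQuotients (hA : IsOpen A) (ha₀ : a₀ ∈ A) (hd : HasFDerivAt h L a₀) :
    Tendsto (fun ε => sSup (riceQuotients A a₀ h ε)) (𝓝[>] 0) (𝓝 ‖L‖) := by
  rw [Metric.tendsto_nhds]
  intro δ hδ
  obtain ⟨r₁, hr₁, hlin⟩ := Metric.eventually_nhds_iff_ball.1 (hd.isLittleO.def (half_pos hδ))
  obtain ⟨r₂, hr₂, hA₂⟩ := Metric.isOpen_iff.1 hA a₀ ha₀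
  have hlin' : ∀ a ∈ Metric.ball a₀ (min r₁ r₂),
      ‖h a - h a₀ - L (a - a₀)‖ ≤ δ / 2 * ‖a - a₀‖ :=
    fun a ha => hlin a (Metric.ball_subset_ball (min_le_left _ _) ha)
  filter_upwards [Ioo_mem_nhdsGT (lt_min hr₁ hr₂)] with ε hε
  have hupper : sSup (riceQuotients A a₀ h ε) ≤ ‖L‖ + δ / 2 :=
    Real.sSup_le (fun q hq => le_of_mem_riceQuotients hlin' hε.2 hq) (by positivity)
  have hlower := sub_le_sSup_riceQuotients (half_pos hδ).le
    ((Metric.ball_subset_ball (min_le_right _ _)).trans hA₂) hlin' hε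
  rw [Real.dist_eq, abs_sub_lt_iff]
  constructor <;> linarith

end Rice

theorem continuousAt_of_isCompact_of_forall_lt {α β : Type*} [TopologicalSpace α]
    [FirstCountableTopology α] [TopologicalSpace β] [FirstCountableTopology β]
    {K : Set β} (hK : IsCompact K) {φ : α → β → ℝ}
    (hφ : ContinuousOn (Function.uncurry φ) (Set.univ ×ˢ K)) {A : Set α} {a₀ : α}
    (hA : A ∈ 𝓝 a₀) {g : α → β}
    (hg : ∀ a ∈ A, g a ∈ K ∧ ∀ y ∈ K, y ≠ g a → φ a (g a) < φ a y) :
    ContinuousAt g a₀ := by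
  by_contra hc
  obtain ⟨U, hU, hfreq⟩ := not_tendsto_iff_exists_frequently_notMem.1 hc
  obtain ⟨u, hu, hup⟩ := exists_seq_forall_of_frequently (hfreq.and_eventually hA)
  have hgK : ∀ k, g (u k) ∈ K := fun k => (hg _ (hup k).2).1
  obtain ⟨y, hyK, ψ, hψ, hlim⟩ := hK.tendsto_subseq hgK
  have hy : y ≠ g a₀ := by
    rintro rfl
    obtain ⟨k, hk⟩ := (hlim.eventually hU).exists
    exact (hup (ψ k)).1 hk
  have hua : Tendsto (u ∘ ψ) atTop (𝓝 a₀) := hu.comp hψ.tendsto_atTop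
  have hlimφ : ∀ {v : ℕ → β} {z : β}, z ∈ K → (∀ k, v k ∈ K) → Tendsto v atTop (𝓝 z) →
      Tendsto (fun k => φ (u (ψ k)) (v k)) atTop (𝓝 (φ a₀ z)) := fun hz hv hvz =>
    (hφ (a₀, _) ⟨trivial, hz⟩).tendsto.comp <| tendsto_nhdsWithin_iff.2
      ⟨hua.prodMk_nhds hvz, Eventually.of_forall fun k => ⟨trivial, hv k⟩⟩
  have hg₀K : g a₀ ∈ K := (hg a₀ (mem_of_mem_nhds hA)).1
  have hle : φ a₀ y ≤ φ a₀ (g a₀) :=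
    le_of_tendsto_of_tendsto' (hlimφ hyK (fun k => hgK (ψ k)) hlim)
      (hlimφ hg₀K (fun _ => hg₀K) tendsto_const_nhds) fun k => by
        rcases eq_or_ne (g a₀) (g (u (ψ k))) with h | h
        · rw [h]
        · exact ((hg _ (hup (ψ k)).2).2 _ hg₀K h).le
  exact ((hg a₀ (mem_of_mem_nhds hA)).2 y hyK hy).not_ge hle

theorem continuousAt_of_forall_half_norm_sub_sq_lt {E V : Type*} [TopologicalSpace E]
    [FirstCountableTopology E] [SeminormedAddCommGroup V] {F : E → V} {K : Set E} (hK : IsCompact K)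
    (hF : ContinuousOn F K) {A : Set V} {a₀ : V} (hA : A ∈ 𝓝 a₀) {g : V → E}
    (hg : ∀ a ∈ A, g a ∈ K ∧ ∀ y ∈ K, y ≠ g a →
      (1 / 2 : ℝ) * ‖a - F (g a)‖ ^ 2 < (1 / 2 : ℝ) * ‖a - F y‖ ^ 2) :
    ContinuousAt g a₀ := by
  have hFK : ContinuousOn (fun q : V × E => F q.2) (Set.univ ×ˢ K) :=
    hF.comp continuousOn_snd fun q hq => hq.2
  refine continuousAt_of_isCompact_of_forall_lt hK
    (φ := fun a y => (1 / 2 : ℝ) * ‖a - F y‖ ^ 2) ?_ hA hg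
  exact continuousOn_const.mul ((continuousOn_fst.sub hFK).norm.pow 2)

section ImplicitFunction

variable {𝕜 : Type*} [NontriviallyNormedField 𝕜]
  {E₁ : Type*} [NormedAddCommGroup E₁] [NormedSpace 𝕜 E₁] [CompleteSpace E₁]
  {E₂ : Type*} [NormedAddCommGroup E₂] [NormedSpace 𝕜 E₂] [CompleteSpace E₂]
  {F : Type*} [NormedAddCommGroup F] [NormedSpace 𝕜 F] [CompleteSpace F]

theorem HasStrictFDerivAt.hasFDerivAt_of_eventually_apply_eq {f : E₁ × E₂ → F}
    {f' : E₁ × E₂ →L[𝕜] F} {x₀ : E₁} {y₀ : E₂} (hf : HasStrictFDerivAt f f' (x₀, y₀))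
    (hf₂ : (f' ∘L .inr 𝕜 E₁ E₂).IsInvertible) {g : E₁ → E₂} (hg : ContinuousAt g x₀)
    (hgx₀ : g x₀ = y₀) (hfg : ∀ᶠ x in 𝓝 x₀, f (x, g x) = f (x₀, y₀)) :
    HasFDerivAt g (-(f' ∘L .inr 𝕜 E₁ E₂).inverse ∘L (f' ∘L .inl 𝕜 E₁ E₂)) x₀ := by
  have hgraph : Tendsto (fun x => (x, g x)) (𝓝 x₀) (𝓝 (x₀, y₀)) :=
    hgx₀ ▸ continuousAt_id.prodMk hg
  have heq : hf.implicitFunctionOfProdDomain hf₂ =ᶠ[𝓝 x₀] g := by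
    filter_upwards [hgraph.eventually (hf.eventually_apply_eq_iff_implicitFunctionOfProdDomain hf₂),
      hfg] with x hiff hx
    exact hiff.1 hx
  exact (hf.hasStrictFDerivAt_implicitFunctionOfProdDomain hf₂).hasFDerivAt.congr_of_eventuallyEq
    heq.symm

end ImplicitFunction

section LeastSquares

variable {E V : Type*} [NormedAddCommGroup E] [InnerProductSpace ℝ E] [CompleteSpace E]
  [NormedAddCommGroup V] [InnerProductSpace ℝ V] [CompleteSpace V]

/-- Over `ℝ` the adjoint is linear rather than conjugate-linear, hence smooth. -/
def realAdjoint : (E →L[ℝ] V) ≃ₗᵢ[ℝ] (V →L[ℝ] E) :=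
  { ContinuousLinearMap.adjoint with map_smul' := fun c A => by simp }

/-- The gradient `DF(y)ᵀ (F y - a)` of `y ↦ ½‖a - F y‖²`; the normal equations of the
least-squares problem read `lsqGradient F (a, y) = 0`. -/
def lsqGradient (F : E → V) (q : V × E) : E :=
  ContinuousLinearMap.adjoint (fderiv ℝ F q.2) (F q.2 - q.1)

variable {F : E → V}

lemma hasFDerivAt_half_norm_sub_sq_s3 {y : E} (hF : DifferentiableAt ℝ F y) (a : V) :
    HasFDerivAt (fun z => (1 / 2 : ℝ) * ‖a - F z‖ ^ 2) (innerSL ℝ (lsqGradient F (a, y))) y := by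
  refine (((hF.hasFDerivAt.const_sub a).norm_sq).const_mul (1 / 2 : ℝ)).congr_fderiv ?_
  ext v
  simp [lsqGradient, ContinuousLinearMap.adjoint_inner_left]

lemma lsqGradient_eq_zero_of_isLocalMin {a : V} {y : E} (hF : DifferentiableAt ℝ F y)
    (hmin : IsLocalMin (fun z => (1 / 2 : ℝ) * ‖a - F z‖ ^ 2) y) : lsqGradient F (a, y) = 0 := by
  have h := congrArg (fun φ : E →L[ℝ] ℝ => φ (lsqGradient F (a, y)))
    (hmin.hasFDerivAt_eq_zero (hasFDerivAt_half_norm_sub_sq_s3 hF a))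
  simpa using h

lemma contDiffOn_lsqGradient {W : Set E} (hW : IsOpen W) {n : WithTop ℕ∞}
    (hF : ContDiffOn ℝ (n + 1) F W) : ContDiffOn ℝ n (lsqGradient F) (Set.univ ×ˢ W) := by
  have hDF : ContDiffOn ℝ n (fun y => realAdjoint (fderiv ℝ F y)) W :=
    (realAdjoint (E := E) (V := V)).contDiff.comp_contDiffOn (hF.fderiv_of_isOpen hW le_rfl)
  have hsnd : Set.MapsTo Prod.snd (Set.univ ×ˢ W : Set (V × E)) W := fun q hq => hq.2
  exact isBoundedBilinearMap_apply.contDiff.comp_contDiffOn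
    ((hDF.comp contDiffOn_snd hsnd).prodMk
      ((hF.of_le le_self_add).comp contDiffOn_snd hsnd |>.sub contDiffOn_fst))

lemma fderiv_lsqGradient_comp_inl {a : V} {y : E}
    (hG : DifferentiableAt ℝ (lsqGradient F) (a, y)) :
    fderiv ℝ (lsqGradient F) (a, y) ∘L .inl ℝ V E =
      -ContinuousLinearMap.adjoint (fderiv ℝ F y) := by
  have h₁ := hG.hasFDerivAt.comp a (hasFDerivAt_prodMk_left (𝕜 := ℝ) a y)
  have h₂ : HasFDerivAt (fun b => lsqGradient F (b, y))
      (-ContinuousLinearMap.adjoint (fderiv ℝ F y)) a :=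
    ((ContinuousLinearMap.adjoint (fderiv ℝ F y)).hasFDerivAt.comp a
      ((hasFDerivAt_id a).const_sub (F y))).congr_fderiv (by ext; simp)
  exact h₁.unique h₂

lemma fderiv_fderiv_half_norm_sub_sq {W : Set E} (hW : IsOpen W)
    (hF : DifferentiableOn ℝ F W) {a : V} {y : E} (hy : y ∈ W)
    (hG : DifferentiableAt ℝ (lsqGradient F) (a, y)) :
    fderiv ℝ (fderiv ℝ (fun z => (1 / 2 : ℝ) * ‖a - F z‖ ^ 2)) y =
      innerSL ℝ ∘L (fderiv ℝ (lsqGradient F) (a, y) ∘L .inr ℝ V E) := by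
  have heq : fderiv ℝ (fun z => (1 / 2 : ℝ) * ‖a - F z‖ ^ 2) =ᶠ[𝓝 y]
      fun z => innerSL ℝ (lsqGradient F (a, z)) := by
    filter_upwards [hW.mem_nhds hy] with z hz
    exact (hasFDerivAt_half_norm_sub_sq_s3 ((hF z hz).differentiableAt (hW.mem_nhds hz)) a).fderiv
  rw [heq.fderiv_eq]
  exact ((innerSL ℝ).hasFDerivAt.comp y
    (hG.hasFDerivAt.comp y (hasFDerivAt_prodMk_right (𝕜 := ℝ) a y))).fderiv

theorem hasFDerivAt_of_lsqGradient_eq_zero {W : Set E} (hW : IsOpen W)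
    (hF : ContDiffOn ℝ 2 F W) {a₀ : V} {y₀ : E} (hy₀ : y₀ ∈ W) {H Hinv : E →L[ℝ] E}
    (hH : ∀ v w, ⟪H v, w⟫ = fderiv ℝ (fderiv ℝ (fun y => (1 / 2 : ℝ) * ‖a₀ - F y‖ ^ 2)) y₀ v w)
    (hHinv₁ : H ∘L Hinv = .id ℝ E) (hHinv₂ : Hinv ∘L H = .id ℝ E) {g : V → E}
    (hg : ContinuousAt g a₀) (hg₀ : g a₀ = y₀)
    (hzero : ∀ᶠ a in 𝓝 a₀, lsqGradient F (a, g a) = 0) :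
    HasFDerivAt g (Hinv ∘L ContinuousLinearMap.adjoint (fderiv ℝ F y₀)) a₀ := by
  have hG : ContDiffAt ℝ 1 (lsqGradient F) (a₀, y₀) :=
    (contDiffOn_lsqGradient hW hF).contDiffAt ((isOpen_univ.prod hW).mem_nhds ⟨trivial, hy₀⟩)
  have hGd : DifferentiableAt ℝ (lsqGradient F) (a₀, y₀) := hG.differentiableAt one_ne_zero
  have hinr : fderiv ℝ (lsqGradient F) (a₀, y₀) ∘L .inr ℝ V E = H := by
    ext v : 1
    refine ext_inner_right ℝ fun w => ?_
    rw [hH, fderiv_fderiv_half_norm_sub_sq hW (hF.differentiableOn two_ne_zero) hy₀ hGd]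
    rfl
  have hgd := (hG.hasStrictFDerivAt one_ne_zero).hasFDerivAt_of_eventually_apply_eq
    (hinr ▸ .of_inverse hHinv₁ hHinv₂) hg hg₀ <| by
      filter_upwards [hzero] with a ha
      rw [ha, ← hg₀, hzero.self_of_nhds]
  rwa [hinr, fderiv_lsqGradient_comp_inl hGd, ContinuousLinearMap.inverse_eq hHinv₁ hHinv₂,
    ContinuousLinearMap.comp_neg, neg_neg] at hgd

end LeastSquares

theorem stmt_3_general {m n p : ℕ}
    (W : Set (EuclideanSpace ℝ (Fin m))) (hW : IsOpen W)
    (F : EuclideanSpace ℝ (Fin m) → EuclideanSpace ℝ (Fin n))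
    (hF : ContDiffOn ℝ (⊤ : ℕ∞) F W)
    (a₀ : EuclideanSpace ℝ (Fin n))
    (y₀ : EuclideanSpace ℝ (Fin m)) (hy₀ : y₀ ∈ W)
    (H Hinv : EuclideanSpace ℝ (Fin m) →L[ℝ] EuclideanSpace ℝ (Fin m))
    (hH : ∀ v w, ⟪H v, w⟫ =
      fderiv ℝ (fderiv ℝ (fun y => (1 / 2 : ℝ) * ‖a₀ - F y‖ ^ 2)) y₀ v w)
    (hHinv₁ : H.comp Hinv = ContinuousLinearMap.id ℝ (EuclideanSpace ℝ (Fin m)))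
    (hHinv₂ : Hinv.comp H = ContinuousLinearMap.id ℝ (EuclideanSpace ℝ (Fin m)))
    (A : Set (EuclideanSpace ℝ (Fin n))) (hA : IsOpen A) (ha₀ : a₀ ∈ A)
    (Y : Set (EuclideanSpace ℝ (Fin m))) (hY : IsOpen Y)
    (hYc : IsCompact (closure Y)) (hYW : closure Y ⊆ W)
    (g : EuclideanSpace ℝ (Fin n) → EuclideanSpace ℝ (Fin m))
    (hg₀ : g a₀ = y₀)
    (hg : ∀ a ∈ A, g a ∈ Y ∧
      ∀ y ∈ closure Y, y ≠ g a →
        (1 / 2 : ℝ) * ‖a - F (g a)‖ ^ 2 < (1 / 2 : ℝ) * ‖a - F y‖ ^ 2)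
    (χ : EuclideanSpace ℝ (Fin m) → EuclideanSpace ℝ (Fin p))
    (hχ : ContDiffOn ℝ (⊤ : ℕ∞) χ W) :
    HasFDerivAt g (Hinv.comp (ContinuousLinearMap.adjoint (fderiv ℝ F y₀))) a₀ ∧
    Tendsto (fun ε : ℝ => sSup {q : ℝ | ∃ a ∈ A, 0 < ‖a - a₀‖ ∧ ‖a - a₀‖ ≤ ε ∧
        q = ‖χ (g a) - χ (g a₀)‖ / ‖a - a₀‖}) (𝓝[>] (0 : ℝ))
      (𝓝 ‖((fderiv ℝ χ y₀).comp Hinv).comp (ContinuousLinearMap.adjoint (fderiv ℝ F y₀))‖) := by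
  have hcont : ContinuousAt g a₀ :=
    continuousAt_of_forall_half_norm_sub_sq_lt hYc (hF.continuousOn.mono hYW) (hA.mem_nhds ha₀)
      fun a ha => ⟨subset_closure (hg a ha).1, (hg a ha).2⟩
  have hmin : ∀ a ∈ A, IsMinOn (fun y => (1 / 2 : ℝ) * ‖a - F y‖ ^ 2) Y (g a) :=
    fun a ha z (hz : z ∈ Y) => by
      show (1 / 2 : ℝ) * ‖a - F (g a)‖ ^ 2 ≤ (1 / 2 : ℝ) * ‖a - F z‖ ^ 2
      rcases eq_or_ne z (g a) with rfl | hne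
      exacts [le_rfl, ((hg a ha).2 z (subset_closure hz) hne).le]
  have hzero : ∀ a ∈ A, lsqGradient F (a, g a) = 0 := fun a ha =>
    lsqGradient_eq_zero_of_isLocalMin
      ((hF.differentiableOn (by simp)).differentiableAt
        (hW.mem_nhds (hYW (subset_closure (hg a ha).1))))
      ((hmin a ha).isLocalMin (hY.mem_nhds (hg a ha).1))
  have hgd := hasFDerivAt_of_lsqGradient_eq_zero hW (hF.of_le (by norm_cast)) hy₀ hH hHinv₁
    hHinv₂ hcont hg₀ (eventually_of_mem (hA.mem_nhds ha₀) hzero)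
  refine ⟨hgd, ?_⟩
  have hχd : HasFDerivAt χ (fderiv ℝ χ y₀) (g a₀) :=
    hg₀ ▸ ((hχ.differentiableOn (by simp)).differentiableAt (hW.mem_nhds hy₀)).hasFDerivAt
  rw [ContinuousLinearMap.comp_assoc]
  exact tendsto_sSup_riceQuotients hA ha₀ (hχd.comp a₀ hgd)

/-- Chart formulation of Theorem 5.2 combined with Theorem 7.2: derivative and Rice condition
number of the localized least-squares solution map at a nondegenerate local minimizer. -/
theorem stmt_3 {m n p : ℕ}
    (W : Set (EuclideanSpace ℝ (Fin m))) (hW : IsOpen W)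
    (F : EuclideanSpace ℝ (Fin m) → EuclideanSpace ℝ (Fin n))
    (hF : ContDiffOn ℝ (⊤ : ℕ∞) F W)
    (a₀ : EuclideanSpace ℝ (Fin n))
    (y₀ : EuclideanSpace ℝ (Fin m)) (hy₀ : y₀ ∈ W)
    (hmin : IsLocalMin (fun y => (1 / 2 : ℝ) * ‖a₀ - F y‖ ^ 2) y₀)
    (H Hinv : EuclideanSpace ℝ (Fin m) →L[ℝ] EuclideanSpace ℝ (Fin m))
    (hH : ∀ v w, ⟪H v, w⟫ =
      fderiv ℝ (fderiv ℝ (fun y => (1 / 2 : ℝ) * ‖a₀ - F y‖ ^ 2)) y₀ v w)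
    (hHinv₁ : H.comp Hinv = ContinuousLinearMap.id ℝ (EuclideanSpace ℝ (Fin m)))
    (hHinv₂ : Hinv.comp H = ContinuousLinearMap.id ℝ (EuclideanSpace ℝ (Fin m)))
    (A : Set (EuclideanSpace ℝ (Fin n))) (hA : IsOpen A) (ha₀ : a₀ ∈ A)
    (Y : Set (EuclideanSpace ℝ (Fin m))) (hY : IsOpen Y) (hy₀Y : y₀ ∈ Y)
    (hYc : IsCompact (closure Y)) (hYW : closure Y ⊆ W)
    (g : EuclideanSpace ℝ (Fin n) → EuclideanSpace ℝ (Fin m))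
    (hg₀ : g a₀ = y₀)
    (hg : ∀ a ∈ A, g a ∈ Y ∧
      ∀ y ∈ closure Y, y ≠ g a →
        (1 / 2 : ℝ) * ‖a - F (g a)‖ ^ 2 < (1 / 2 : ℝ) * ‖a - F y‖ ^ 2)
    (χ : EuclideanSpace ℝ (Fin m) → EuclideanSpace ℝ (Fin p))
    (hχ : ContDiffOn ℝ (⊤ : ℕ∞) χ W) :
    HasFDerivAt g (Hinv.comp (ContinuousLinearMap.adjoint (fderiv ℝ F y₀))) a₀ ∧
    Tendsto (fun ε : ℝ => sSup {q : ℝ | ∃ a ∈ A, 0 < ‖a - a₀‖ ∧ ‖a - a₀‖ ≤ ε ∧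
        q = ‖χ (g a) - χ (g a₀)‖ / ‖a - a₀‖}) (𝓝[>] (0 : ℝ))
      (𝓝 ‖((fderiv ℝ χ y₀).comp Hinv).comp (ContinuousLinearMap.adjoint (fderiv ℝ F y₀))‖) :=
  stmt_3_general W hW F hF a₀ y₀ hy₀ H Hinv hH hHinv₁ hHinv₂ A hA ha₀ Y hY hYc hYW g hg₀ hg χ hχ
end
end

section
/- Let B : ℝᵐ → ℝⁿ be an injective linear map and M : ℝᵐ → ℝᵖ a linear map. Then BᵀB is invertible and the operator norm of M (BᵀB)⁻¹ Bᵀ : ℝⁿ → ℝᵖ equals sup{ ‖Mv‖/‖Bv‖ : v ∈ ℝᵐ, v ≠ 0 }. -/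
noncomputable section

open scoped RealInnerProductSpace

private lemma norm_le_of_orth {F : Type*} [NormedAddCommGroup F] [InnerProductSpace ℝ F]
    (a w : F) (h : ⟪a, w - a⟫ = 0) : ‖a‖ ≤ ‖w‖ := by
  have hpyth := norm_add_sq_real a (w - a)
  have hsum : a + (w - a) = w := by abel
  rw [hsum, h] at hpyth
  nlinarith [norm_nonneg a, norm_nonneg w, sq_nonneg ‖w - a‖]


/-- Linear-algebra content of Corollary 5.4: for injective `B` the Gram map `BᵀB` is
invertible and `‖M (BᵀB)⁻¹ Bᵀ‖ = sup_{v ≠ 0} ‖Mv‖/‖Bv‖`. -/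
theorem stmt_5 {m n p : ℕ}
    (B : EuclideanSpace ℝ (Fin m) →L[ℝ] EuclideanSpace ℝ (Fin n))
    (hB : Function.Injective B)
    (M : EuclideanSpace ℝ (Fin m) →L[ℝ] EuclideanSpace ℝ (Fin p)) :
    ∃ C : EuclideanSpace ℝ (Fin m) →L[ℝ] EuclideanSpace ℝ (Fin m),
      ((ContinuousLinearMap.adjoint B).comp B).comp C =
        ContinuousLinearMap.id ℝ (EuclideanSpace ℝ (Fin m)) ∧
      C.comp ((ContinuousLinearMap.adjoint B).comp B) =
        ContinuousLinearMap.id ℝ (EuclideanSpace ℝ (Fin m)) ∧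
      ‖(M.comp C).comp (ContinuousLinearMap.adjoint B)‖ =
        sSup {q : ℝ | ∃ v : EuclideanSpace ℝ (Fin m), v ≠ 0 ∧ q = ‖M v‖ / ‖B v‖} := by
  set E := EuclideanSpace ℝ (Fin m)
  set G : E →L[ℝ] E := (ContinuousLinearMap.adjoint B).comp B with hGdef
  have hinner : ∀ u w : E, ⟪G u, w⟫ = ⟪B u, B w⟫ := fun u w =>
    ContinuousLinearMap.adjoint_inner_left B w (B u)
  have hGinj : Function.Injective G := by
    intro a b hab
    have h0 : G (a - b) = 0 := by rw [map_sub, hab, sub_self]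
    have h1 : ⟪B (a - b), B (a - b)⟫ = 0 := by
      rw [← hinner, h0, inner_zero_left]
    have h2 : B (a - b) = 0 := by rwa [inner_self_eq_zero] at h1
    have h3 : a - b = 0 := hB (by rw [h2, map_zero])
    exact sub_eq_zero.mp h3
  have hGsurj : Function.Surjective G :=
    LinearMap.injective_iff_surjective.mp hGinj
  set e : E ≃L[ℝ] E :=
    (LinearEquiv.ofBijective (G : E →ₗ[ℝ] E) ⟨hGinj, hGsurj⟩).toContinuousLinearEquiv with he
  have heapp : ∀ v : E, e v = G v := fun v => rfl
  set C : E →L[ℝ] E := (e.symm : E →L[ℝ] E) with hC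
  have hCG : ∀ v : E, C (G v) = v := by
    intro v; rw [hC, ContinuousLinearEquiv.coe_coe, ← heapp]
    exact e.symm_apply_apply v
  have hGC : ∀ v : E, G (C v) = v := by
    intro v
    have := e.apply_symm_apply v
    rwa [heapp] at this
  refine ⟨C, ?_, ?_, ?_⟩
  · exact ContinuousLinearMap.ext hGC
  · exact ContinuousLinearMap.ext hCG
  set T := (M.comp C).comp (ContinuousLinearMap.adjoint B) with hT
  set s := {q : ℝ | ∃ v : E, v ≠ 0 ∧ q = ‖M v‖ / ‖B v‖} with hs
  -- T (B v) = M v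
  have hTB : ∀ v : E, T (B v) = M v := by
    intro v
    have : (ContinuousLinearMap.adjoint B) (B v) = G v := rfl
    simp only [hT, ContinuousLinearMap.comp_apply, this, hCG]
  have hBne : ∀ v : E, v ≠ 0 → B v ≠ 0 := by
    intro v hv hbv
    exact hv (hB (by rw [hbv, map_zero]))
  have hub : ∀ q ∈ s, q ≤ ‖T‖ := by
    rintro q ⟨v, hv, rfl⟩
    have hBv : 0 < ‖B v‖ := norm_pos_iff.mpr (hBne v hv)
    rw [div_le_iff₀ hBv]
    calc ‖M v‖ = ‖T (B v)‖ := by rw [hTB]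
      _ ≤ ‖T‖ * ‖B v‖ := T.le_opNorm (B v)
  have hbdd : BddAbove s := ⟨‖T‖, hub⟩
  have hSnonneg : 0 ≤ sSup s := by
    apply Real.sSup_nonneg
    rintro q ⟨v, hv, rfl⟩
    positivity
  refine le_antisymm ?_ (Real.sSup_le hub (norm_nonneg T))
  apply ContinuousLinearMap.opNorm_le_bound T hSnonneg
  intro w
  set v₀ : E := C ((ContinuousLinearMap.adjoint B) w) with hv₀
  have hTw : T w = M v₀ := rfl
  have hGv₀ : G v₀ = (ContinuousLinearMap.adjoint B) w := hGC _
  -- orthogonality: ⟪B v₀, w - B v₀⟫ = 0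
  have horth : ⟪B v₀, w - B v₀⟫ = 0 := by
    have h1 : ⟪B v₀, w⟫ = ⟪G v₀, v₀⟫ := by
      rw [real_inner_comm, hGv₀]
      exact (ContinuousLinearMap.adjoint_inner_left B v₀ w).symm
    rw [inner_sub_right, h1, ← hinner v₀ v₀, sub_self]
  have hle : ‖B v₀‖ ≤ ‖w‖ := norm_le_of_orth (B v₀) w horth
  rw [hTw]
  by_cases hv : v₀ = 0
  · rw [hv, map_zero, norm_zero]
    exact mul_nonneg hSnonneg (norm_nonneg w)
  · have hBv : 0 < ‖B v₀‖ := norm_pos_iff.mpr (hBne v₀ hv)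
    have hq : ‖M v₀‖ / ‖B v₀‖ ≤ sSup s := le_csSup hbdd ⟨v₀, hv, rfl⟩
    calc ‖M v₀‖ = ‖M v₀‖ / ‖B v₀‖ * ‖B v₀‖ := by field_simp
      _ ≤ sSup s * ‖B v₀‖ := by apply mul_le_mul_of_nonneg_right hq hBv.le
      _ ≤ sSup s * ‖w‖ := mul_le_mul_of_nonneg_left hle hSnonneg
end
end

section
/- Let ψ : U → ℝⁿ be a C^∞ map on an open set U ⊆ ℝᵐ with Dψ(u) injective for every u ∈ U, and define G : ℝⁿ × U → ℝᵐ by G(a, u) := Dψ(u)ᵀ(a − ψ(u)). Then G is C^∞, and for every (a, u) ∈ ℝⁿ × U the derivative DG(a,u) : ℝⁿ × ℝᵐ → ℝᵐ is surjective and its kernel is an n-dimensional linear subspace of ℝⁿ × ℝᵐ. -/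
/-!
The partial derivative of `G` in the `a`-direction is `Dψ(u)ᵀ`, which is surjective because
`Dψ(u)` is injective (the range of an adjoint is the orthogonal complement of the kernel).
Hence `DG(a,u)` is surjective, and rank–nullity gives its kernel dimension `(n + m) - m = n`.
-/

open Set ContinuousLinearMap

theorem ContinuousLinearMap.surjective_adjoint_of_injective {𝕜 E F : Type*} [RCLike 𝕜]
    [NormedAddCommGroup E] [InnerProductSpace 𝕜 E] [CompleteSpace E] [FiniteDimensional 𝕜 E]
    [NormedAddCommGroup F] [InnerProductSpace 𝕜 F] [CompleteSpace F]
    {T : E →L[𝕜] F} (hT : Function.Injective T) : Function.Surjective (adjoint T) := by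
  have hker : T.ker = ⊥ := LinearMap.ker_eq_bot.mpr hT
  have hclosed := Submodule.closed_of_finiteDimensional (adjoint T).range
  rw [← coe_coe, ← LinearMap.range_eq_top, ← hclosed.submodule_topologicalClosure_eq,
    ← T.orthogonal_ker, hker, Submodule.bot_orthogonal_eq_top]

theorem surjective_fderiv_of_hasFDerivAt_left {𝕜 E F G : Type*} [NontriviallyNormedField 𝕜]
    [NormedAddCommGroup E] [NormedSpace 𝕜 E] [NormedAddCommGroup F] [NormedSpace 𝕜 F]
    [NormedAddCommGroup G] [NormedSpace 𝕜 G] {f : E × F → G} {L : E →L[𝕜] G} {a : E} {u : F}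
    (hf : DifferentiableAt 𝕜 f (a, u)) (hL : HasFDerivAt (fun b => f (b, u)) L a)
    (hsurj : Function.Surjective L) : Function.Surjective (fderiv 𝕜 f (a, u)) := by
  have hpartial : (fderiv 𝕜 f (a, u)).comp (inl 𝕜 E F) = L :=
    (hf.hasFDerivAt.comp a (hasFDerivAt_prodMk_left a u)).unique hL
  rw [← hpartial, coe_comp] at hsurj
  exact hsurj.of_comp

section CriticalPointMap

variable {E F : Type*} [NormedAddCommGroup E] [InnerProductSpace ℝ E] [CompleteSpace E]
  [NormedAddCommGroup F] [InnerProductSpace ℝ F] [CompleteSpace F]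

/-- The zeros are the pairs `(a, u)` with `a - ψ u` normal to the image of `ψ` at `ψ u`. -/
noncomputable def criticalPointMap (ψ : E → F) (p : F × E) : E :=
  adjoint (fderiv ℝ ψ p.2) (p.1 - ψ p.2)

theorem contDiffOn_criticalPointMap {ψ : E → F} {U : Set E} {k : WithTop ℕ∞} (hU : IsOpen U)
    (hψ : ContDiffOn ℝ (k + 1) ψ U) : ContDiffOn ℝ k (criticalPointMap ψ) (univ ×ˢ U) := by
  have hmaps : MapsTo Prod.snd (univ ×ˢ U : Set (F × E)) U := fun _ hp => hp.2
  have hadjoint : ContDiff ℝ k (fun T : E →L[ℝ] F => adjoint T) :=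
    (adjoint (𝕜 := ℝ) (E := E) (F := F)).toLinearIsometry.toContinuousLinearMap.contDiff
  have hDψ : ContDiffOn ℝ k (fderiv ℝ ψ) U := hψ.fderiv_of_isOpen hU le_rfl
  exact ((hadjoint.comp_contDiffOn hDψ).comp contDiffOn_snd hmaps).clm_apply
    (contDiffOn_fst.sub ((hψ.of_le le_self_add).comp contDiffOn_snd hmaps))

theorem hasFDerivAt_criticalPointMap_left (ψ : E → F) (a : F) (u : E) :
    HasFDerivAt (fun b => criticalPointMap ψ (b, u)) (adjoint (fderiv ℝ ψ u)) a := by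
  have h := (adjoint (fderiv ℝ ψ u)).hasFDerivAt.comp a ((hasFDerivAt_id a).sub_const (ψ u))
  rwa [comp_id] at h

end CriticalPointMap

/-- Chart formulation of Lemma 4.1: the defining map `G(a,u) = Dψ(u)ᵀ(a − ψ(u))` of the
critical point locus is smooth, a submersion, and its derivative has `n`-dimensional kernel. -/
theorem stmt_8 {m n : ℕ}
    (U : Set (EuclideanSpace ℝ (Fin m))) (hU : IsOpen U)
    (ψ : EuclideanSpace ℝ (Fin m) → EuclideanSpace ℝ (Fin n))
    (hψ : ContDiffOn ℝ (⊤ : ℕ∞) ψ U)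
    (hinj : ∀ u ∈ U, Function.Injective (fderiv ℝ ψ u))
    (G : EuclideanSpace ℝ (Fin n) × EuclideanSpace ℝ (Fin m) → EuclideanSpace ℝ (Fin m))
    (hG : ∀ a u, G (a, u) = ContinuousLinearMap.adjoint (fderiv ℝ ψ u) (a - ψ u)) :
    ContDiffOn ℝ (⊤ : ℕ∞) G (Set.univ ×ˢ U) ∧
    ∀ (a : EuclideanSpace ℝ (Fin n)), ∀ u ∈ U,
      Function.Surjective (fderiv ℝ G (a, u)) ∧
      Module.finrank ℝ (LinearMap.ker ((fderiv ℝ G (a, u)).toLinearMap)) = n := by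
  obtain rfl : G = criticalPointMap ψ := funext fun p => hG p.1 p.2
  have hsmooth : ContDiffOn ℝ (⊤ : ℕ∞) (criticalPointMap ψ) (univ ×ˢ U) :=
    contDiffOn_criticalPointMap hU (by simpa using hψ)
  refine ⟨hsmooth, fun a u hu => ?_⟩
  have hdiff : DifferentiableAt ℝ (criticalPointMap ψ) (a, u) :=
    (hsmooth.contDiffAt ((isOpen_univ.prod hU).mem_nhds ⟨trivial, hu⟩)).differentiableAt
      (by simp)
  have hsurj : Function.Surjective (fderiv ℝ (criticalPointMap ψ) (a, u)) :=
    surjective_fderiv_of_hasFDerivAt_left hdiff (hasFDerivAt_criticalPointMap_left ψ a u)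
      (surjective_adjoint_of_injective (hinj u hu))
  refine ⟨hsurj, ?_⟩
  have hrank := (fderiv ℝ (criticalPointMap ψ) (a, u)).toLinearMap.finrank_range_add_finrank_ker
  rw [LinearMap.range_eq_top.mpr hsurj, finrank_top, Module.finrank_prod,
    finrank_euclideanSpace_fin, finrank_euclideanSpace_fin] at hrank
  omega
end

section
/- Let ψ : U → ℝⁿ be a C^∞ map on an open set U ⊆ ℝᵐ with Dψ(u₀) injective at a point u₀ ∈ U, and let η ∈ ℝⁿ satisfy Dψ(u₀)ᵀη = 0. For α ∈ ℝ let H_α denote the Hessian at u₀ of the function u ↦ ½‖(ψ(u₀) + αη) − ψ(u)‖². Then H_α = Dψ(u₀)ᵀDψ(u₀) − αW, where W is the symmetric m×m matrix with ⟨Wv, w⟩ = ⟨η, D²ψ(u₀)[v, w]⟩, and the set {α ∈ ℝ : H_α is not invertible} is finite, containing at most m elements. -/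
open scoped RealInnerProductSpace

/-!
Writing `a = ψ u₀ + α • η`, the Hessian of `u ↦ ½‖a - ψ u‖²` at `u₀` is
`⟪Dψ v, Dψ w⟫ + ⟪ψ u₀ - a, D²ψ[v, w]⟫ = ⟪DψᵀDψ v, w⟫ - α ⟪W v, w⟫`, so `H α = DψᵀDψ - α • W`.
Its determinant is a polynomial in `α` of degree at most `m`, and it does not vanish at `α = 0`
because `DψᵀDψ` is invertible when `Dψ` is injective; so it has at most `m` roots.
-/

noncomputable section

open Polynomial

namespace Polynomial

theorem ncard_setOf_isRoot_le {R : Type*} [CommRing R] [IsDomain R] {p : R[X]} (hp : p ≠ 0) :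
    {x | p.IsRoot x}.ncard ≤ p.natDegree := by
  classical
  have hroots : {x | p.IsRoot x} = ↑p.roots.toFinset := by
    ext x; simp [mem_roots hp]
  rw [hroots, Set.ncard_coe_finset]
  exact p.roots.toFinset_card_le.trans p.card_roots'

end Polynomial

namespace Matrix

variable {ι R : Type*} [Fintype ι] [DecidableEq ι]

/-- `det (A - X • B)`, as a polynomial in `X`. -/
def detPencil [CommRing R] (A B : Matrix ι ι R) : R[X] :=
  det ((X : R[X]) • (-B).map C + A.map C)

theorem eval_detPencil [CommRing R] (A B : Matrix ι ι R) (α : R) :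
    (detPencil A B).eval α = det (A - α • B) := by
  rw [detPencil, ← coe_evalRingHom, RingHom.map_det]
  congr 1
  ext i j
  simp only [RingHom.mapMatrix_apply, map_apply, add_apply, smul_apply, neg_apply, sub_apply,
    smul_eq_mul, coe_evalRingHom, eval_add, eval_mul, eval_X, eval_C]
  ring

theorem natDegree_detPencil_le [CommRing R] (A B : Matrix ι ι R) :
    (detPencil A B).natDegree ≤ Fintype.card ι :=
  natDegree_det_X_add_C_le (-B) A

theorem detPencil_ne_zero [CommRing R] {A : Matrix ι ι R} (hA : A.det ≠ 0) (B : Matrix ι ι R) :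
    detPencil A B ≠ 0 := fun h => hA <| by
  simpa [h] using (eval_detPencil A B 0).symm

theorem finite_setOf_det_sub_smul_eq_zero [Field R] {A : Matrix ι ι R} (hA : A.det ≠ 0)
    (B : Matrix ι ι R) : {α : R | det (A - α • B) = 0}.Finite := by
  simpa only [IsRoot.def, eval_detPencil] using finite_setOfPred_isRoot (detPencil_ne_zero hA B)

theorem ncard_setOf_det_sub_smul_eq_zero_le [Field R] {A : Matrix ι ι R} (hA : A.det ≠ 0)
    (B : Matrix ι ι R) : {α : R | det (A - α • B) = 0}.ncard ≤ Fintype.card ι := by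
  simpa only [IsRoot.def, eval_detPencil] using
    (ncard_setOf_isRoot_le (detPencil_ne_zero hA B)).trans (natDegree_detPencil_le A B)

end Matrix

namespace Module.End

variable {K V : Type*} [Field K] [AddCommGroup V] [Module K V] [FiniteDimensional K V]

theorem setOf_not_isUnit_sub_smul_eq_setOf_det_toMatrix (A B : Module.End K V) :
    {α : K | ¬IsUnit (A - α • B)} =
      {α : K | (LinearMap.toMatrix (finBasis K V) (finBasis K V) A -
        α • LinearMap.toMatrix (finBasis K V) (finBasis K V) B).det = 0} := by
  ext α
  rw [Set.mem_ofPred_eq, Set.mem_ofPred_eq, LinearMap.isUnit_iff_isUnit_det, isUnit_iff_ne_zero,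
    not_not, ← LinearMap.det_toMatrix (finBasis K V), map_sub, map_smul]

theorem finite_setOf_not_isUnit_sub_smul {A : Module.End K V} (hA : IsUnit A) (B : Module.End K V) :
    {α : K | ¬IsUnit (A - α • B)}.Finite := by
  rw [setOf_not_isUnit_sub_smul_eq_setOf_det_toMatrix]
  refine Matrix.finite_setOf_det_sub_smul_eq_zero ?_ _
  rwa [LinearMap.det_toMatrix, ← isUnit_iff_ne_zero, ← LinearMap.isUnit_iff_isUnit_det]

theorem ncard_setOf_not_isUnit_sub_smul_le {A : Module.End K V} (hA : IsUnit A)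
    (B : Module.End K V) : {α : K | ¬IsUnit (A - α • B)}.ncard ≤ Module.finrank K V := by
  rw [setOf_not_isUnit_sub_smul_eq_setOf_det_toMatrix]
  refine (Matrix.ncard_setOf_det_sub_smul_eq_zero_le ?_ _).trans_eq (Fintype.card_fin _)
  rwa [LinearMap.det_toMatrix, ← isUnit_iff_ne_zero, ← LinearMap.isUnit_iff_isUnit_det]

end Module.End

namespace ContinuousLinearMap

variable {𝕜 E : Type*} [NontriviallyNormedField 𝕜] [CompleteSpace 𝕜] [NormedAddCommGroup E]
  [NormedSpace 𝕜 E] [FiniteDimensional 𝕜 E]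

theorem setOf_not_isUnit_sub_smul_eq_toLinearMap (A B : E →L[𝕜] E) :
    {α : 𝕜 | ¬IsUnit (A - α • B)} = {α : 𝕜 | ¬IsUnit ((A : E →ₗ[𝕜] E) - α • (B : E →ₗ[𝕜] E))} := by
  have := FiniteDimensional.complete 𝕜 E
  simp only [isUnit_iff_isUnit_toLinearMap, toLinearMap_sub, toLinearMap_smul]

theorem finite_setOf_not_isUnit_sub_smul {A : E →L[𝕜] E} (hA : IsUnit A) (B : E →L[𝕜] E) :
    {α : 𝕜 | ¬IsUnit (A - α • B)}.Finite := by
  have := FiniteDimensional.complete 𝕜 E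
  rw [setOf_not_isUnit_sub_smul_eq_toLinearMap]
  exact Module.End.finite_setOf_not_isUnit_sub_smul (isUnit_iff_isUnit_toLinearMap.1 hA) _

theorem ncard_setOf_not_isUnit_sub_smul_le {A : E →L[𝕜] E} (hA : IsUnit A) (B : E →L[𝕜] E) :
    {α : 𝕜 | ¬IsUnit (A - α • B)}.ncard ≤ Module.finrank 𝕜 E := by
  have := FiniteDimensional.complete 𝕜 E
  rw [setOf_not_isUnit_sub_smul_eq_toLinearMap]
  exact Module.End.ncard_setOf_not_isUnit_sub_smul_le (isUnit_iff_isUnit_toLinearMap.1 hA) _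

end ContinuousLinearMap

theorem ContinuousLinearMap.isUnit_adjoint_comp_self_of_injective {𝕜 E F : Type*} [RCLike 𝕜]
    [NormedAddCommGroup E] [InnerProductSpace 𝕜 E] [CompleteSpace E] [FiniteDimensional 𝕜 E]
    [NormedAddCommGroup F] [InnerProductSpace 𝕜 F] [CompleteSpace F] {T : E →L[𝕜] F}
    (hT : Function.Injective T) : IsUnit (adjoint T ∘L T) := by
  have hinj : Function.Injective (adjoint T ∘L T) := (adjoint_comp_self_injective_iff T).2 hT
  exact isUnit_iff_bijective.2
    ⟨hinj, (LinearMap.injective_iff_surjective (f := (adjoint T ∘L T : E →ₗ[𝕜] E))).1 hinj⟩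

section Hessian

variable {E F : Type*} [NormedAddCommGroup E] [InnerProductSpace ℝ E]
  [NormedAddCommGroup F] [InnerProductSpace ℝ F] {ψ : E → F} {u : E}

theorem HasFDerivAt.half_norm_sq_const_sub {ψ' : E →L[ℝ] F} (hψ : HasFDerivAt ψ ψ' u) (a : F) :
    HasFDerivAt (fun x => (1 / 2 : ℝ) * ‖a - ψ x‖ ^ 2) ((innerSL ℝ (ψ u - a)).comp ψ') u := by
  have h := (hψ.sub_const a).norm_sq.const_mul (1 / 2 : ℝ)
  simp only [norm_sub_rev (ψ _) a] at h
  refine h.congr_fderiv ?_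
  ext v
  simp

theorem fderiv_fderiv_half_norm_sq_const_sub_apply (hψ : ContDiffAt ℝ 2 ψ u) (a : F) (v w : E) :
    fderiv ℝ (fderiv ℝ (fun x => (1 / 2 : ℝ) * ‖a - ψ x‖ ^ 2)) u v w =
      ⟪fderiv ℝ ψ u v, fderiv ℝ ψ u w⟫ + ⟪ψ u - a, fderiv ℝ (fderiv ℝ ψ) u v w⟫ := by
  have hfderiv : fderiv ℝ (fun x => (1 / 2 : ℝ) * ‖a - ψ x‖ ^ 2) =ᶠ[nhds u]
      fun x => (innerSL ℝ (ψ x - a)).comp (fderiv ℝ ψ x) := by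
    filter_upwards [hψ.eventually (by simp)] with x hx
    exact ((hx.differentiableAt (by simp)).hasFDerivAt.half_norm_sq_const_sub a).fderiv
  have hD2 : HasFDerivAt (fderiv ℝ ψ) (fderiv ℝ (fderiv ℝ ψ) u) u :=
    ((hψ.fderiv_right (m := 1) (by norm_num)).differentiableAt (by simp)).hasFDerivAt
  have hinner : HasFDerivAt (fun x => innerSL ℝ (ψ x - a)) ((innerSL ℝ).comp (fderiv ℝ ψ u)) u :=
    (innerSL ℝ).hasFDerivAt.comp u ((hψ.differentiableAt (by simp)).hasFDerivAt.sub_const a)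
  rw [hfderiv.fderiv_eq, (hinner.clm_comp hD2).fderiv]
  simp only [add_apply, ContinuousLinearMap.comp_apply,
    ContinuousLinearMap.compL_apply, ContinuousLinearMap.flip_apply, innerSL_apply_apply]
  ring

end Hessian

open ContinuousLinearMap in
theorem stmt_9_general {m n : ℕ}
    (U : Set (EuclideanSpace ℝ (Fin m))) (hU : IsOpen U)
    (ψ : EuclideanSpace ℝ (Fin m) → EuclideanSpace ℝ (Fin n))
    (hψ : ContDiffOn ℝ (⊤ : ℕ∞) ψ U)
    (u₀ : EuclideanSpace ℝ (Fin m)) (hu₀ : u₀ ∈ U)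
    (hinj : Function.Injective (fderiv ℝ ψ u₀))
    (η : EuclideanSpace ℝ (Fin n))
    (W : EuclideanSpace ℝ (Fin m) →L[ℝ] EuclideanSpace ℝ (Fin m))
    (hW : ∀ v w, ⟪W v, w⟫ = ⟪η, fderiv ℝ (fderiv ℝ ψ) u₀ v w⟫)
    (H : ℝ → (EuclideanSpace ℝ (Fin m) →L[ℝ] EuclideanSpace ℝ (Fin m)))
    (hHα : ∀ (α : ℝ) (v w), ⟪H α v, w⟫ =
      fderiv ℝ (fderiv ℝ (fun u => (1 / 2 : ℝ) * ‖(ψ u₀ + α • η) - ψ u‖ ^ 2)) u₀ v w) :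
    (∀ α : ℝ, H α =
      (ContinuousLinearMap.adjoint (fderiv ℝ ψ u₀)).comp (fderiv ℝ ψ u₀) - α • W) ∧
    {α : ℝ | ¬ IsUnit (H α)}.Finite ∧ {α : ℝ | ¬ IsUnit (H α)}.ncard ≤ m := by
  set D := fderiv ℝ ψ u₀
  have hψ₂ : ContDiffAt ℝ 2 ψ u₀ :=
    (hψ.contDiffAt (hU.mem_nhds hu₀)).of_le (WithTop.coe_le_coe.2 le_top)
  have hH : ∀ α : ℝ, H α = (adjoint D).comp D - α • W := fun α => by
    ext1 v
    refine ext_inner_right ℝ fun w => ?_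
    rw [hHα, fderiv_fderiv_half_norm_sq_const_sub_apply hψ₂, sub_add_cancel_left, inner_neg_left,
      real_inner_smul_left, ← hW, sub_apply, smul_apply, comp_apply, inner_sub_left,
      real_inner_smul_left, adjoint_inner_left]
    ring
  have hA : IsUnit ((adjoint D).comp D) := isUnit_adjoint_comp_self_of_injective hinj
  refine ⟨hH, ?_, ?_⟩ <;> simp only [hH]
  · exact finite_setOf_not_isUnit_sub_smul hA W
  · simpa only [finrank_euclideanSpace_fin] using ncard_setOf_not_isUnit_sub_smul_le hA W

/-- Density argument in Lemma 4.2: along a normal ray, the Hessian of the distance function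
is `DψᵀDψ − αW` and it is singular for at most `m` values of `α`. -/
theorem stmt_9 {m n : ℕ}
    (U : Set (EuclideanSpace ℝ (Fin m))) (hU : IsOpen U)
    (ψ : EuclideanSpace ℝ (Fin m) → EuclideanSpace ℝ (Fin n))
    (hψ : ContDiffOn ℝ (⊤ : ℕ∞) ψ U)
    (u₀ : EuclideanSpace ℝ (Fin m)) (hu₀ : u₀ ∈ U)
    (hinj : Function.Injective (fderiv ℝ ψ u₀))
    (η : EuclideanSpace ℝ (Fin n))
    (hη : ContinuousLinearMap.adjoint (fderiv ℝ ψ u₀) η = 0)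
    (W : EuclideanSpace ℝ (Fin m) →L[ℝ] EuclideanSpace ℝ (Fin m))
    (hW : ∀ v w, ⟪W v, w⟫ = ⟪η, fderiv ℝ (fderiv ℝ ψ) u₀ v w⟫)
    (H : ℝ → (EuclideanSpace ℝ (Fin m) →L[ℝ] EuclideanSpace ℝ (Fin m)))
    (hHα : ∀ (α : ℝ) (v w), ⟪H α v, w⟫ =
      fderiv ℝ (fderiv ℝ (fun u => (1 / 2 : ℝ) * ‖(ψ u₀ + α • η) - ψ u‖ ^ 2)) u₀ v w) :
    (∀ α : ℝ, H α =
      (ContinuousLinearMap.adjoint (fderiv ℝ ψ u₀)).comp (fderiv ℝ ψ u₀) - α • W) ∧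
    {α : ℝ | ¬ IsUnit (H α)}.Finite ∧ {α : ℝ | ¬ IsUnit (H α)}.ncard ≤ m :=
  stmt_9_general U hU ψ hψ u₀ hu₀ hinj η W hW H hHα
end
end

section
/- Let ψ : U → ℝⁿ be a C² map on an open set U ⊆ ℝᵐ, and let u : (−1, 1) → U and a : (−1, 1) → ℝⁿ be C¹ curves satisfying Dψ(u(t))ᵀ(a(t) − ψ(u(t))) = 0 for all t ∈ (−1,1). Then Dψ(u(0))ᵀ a′(0) = H u′(0), where H is the Hessian at u(0) of the function u ↦ ½‖a(0) − ψ(u)‖². -/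
/- The hypothesis says that `u(t)` is a critical point of `z ↦ ½‖a(t) - ψ z‖²`. Writing `a₀ = a(0)`,
it rewrites the gradient of `d(z) = ½‖a₀ - ψ z‖²` along the curve as
`Dd(u t) w = ⟪a t - a₀, Dψ(u t) w⟫`. Differentiating both sides at `t = 0`, the left side gives
`D²d(u 0)(u′ 0, w) = ⟪H u′(0), w⟫` by the chain rule, and the right side gives `⟪a′(0), Dψ(u 0) w⟫`
because its first factor vanishes at `t = 0`. -/

open scoped RealInnerProductSpace
open Filter Topology

section

variable {E F : Type*} [NormedAddCommGroup E] [NormedAddCommGroup F] [InnerProductSpace ℝ F]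

theorem fderiv_half_norm_sub_sq_apply [NormedSpace ℝ E] {ψ : E → F} {z : E}
    (hψ : DifferentiableAt ℝ ψ z) (a : F) (w : E) :
    fderiv ℝ (fun z => (1 / 2 : ℝ) * ‖a - ψ z‖ ^ 2) z w = ⟪ψ z - a, fderiv ℝ ψ z w⟫ := by
  have h := (hψ.hasFDerivAt.const_sub a).norm_sq.const_mul (1 / 2 : ℝ)
  rw [h.fderiv]
  simp only [smul_apply, ContinuousLinearMap.comp_apply, innerSL_apply_apply,
    neg_apply, inner_neg_right, ← inner_neg_left, neg_sub, smul_eq_mul,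
    nsmul_eq_mul]
  ring

variable [InnerProductSpace ℝ E] [CompleteSpace E] [CompleteSpace F]

theorem fderiv_half_norm_sub_sq_apply_of_adjoint_eq_zero {ψ : E → F} {z : E}
    (hψ : DifferentiableAt ℝ ψ z) {a b : F}
    (hb : ContinuousLinearMap.adjoint (fderiv ℝ ψ z) (b - ψ z) = 0) (w : E) :
    fderiv ℝ (fun z => (1 / 2 : ℝ) * ‖a - ψ z‖ ^ 2) z w = ⟪b - a, fderiv ℝ ψ z w⟫ := by
  have hperp : ⟪b - ψ z, fderiv ℝ ψ z w⟫ = 0 := by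
    rw [← ContinuousLinearMap.adjoint_inner_left, hb, inner_zero_left]
  rw [fderiv_half_norm_sub_sq_apply hψ, ← sub_add_sub_cancel b (ψ z) a, inner_add_left, hperp,
    zero_add]

theorem inner_adjoint_fderiv_deriv_eq_fderiv_fderiv_half_norm_sub_sq
    {ψ : E → F} {u : ℝ → E} {a : ℝ → F} {u' : E} {a' : F} {t₀ : ℝ}
    (hψ : ContDiffAt ℝ 2 ψ (u t₀)) (hu : HasDerivAt u u' t₀) (ha : HasDerivAt a a' t₀)
    (hcrit : ∀ᶠ t in 𝓝 t₀,
      ContinuousLinearMap.adjoint (fderiv ℝ ψ (u t)) (a t - ψ (u t)) = 0) (w : E) :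
    ⟪ContinuousLinearMap.adjoint (fderiv ℝ ψ (u t₀)) a', w⟫ =
      fderiv ℝ (fderiv ℝ (fun z => (1 / 2 : ℝ) * ‖a t₀ - ψ z‖ ^ 2)) (u t₀) u' w := by
  set d := fun z => (1 / 2 : ℝ) * ‖a t₀ - ψ z‖ ^ 2
  have hd : DifferentiableAt ℝ (fderiv ℝ d) (u t₀) :=
    ((contDiffAt_const.sub hψ).norm_sq ℝ |>.const_smul (1 / 2 : ℝ) |>.fderiv_right
      (m := 1) le_rfl).differentiableAt one_ne_zero
  have hDψ : DifferentiableAt ℝ (fderiv ℝ ψ) (u t₀) :=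
    (hψ.fderiv_right (m := 1) le_rfl).differentiableAt one_ne_zero
  have hψ_near : ∀ᶠ t in 𝓝 t₀, DifferentiableAt ℝ ψ (u t) :=
    hu.continuousAt.eventually ((hψ.eventually (by simp)).mono fun _ h =>
      h.differentiableAt (by norm_num))
  have hgrad : HasDerivAt (fun t => fderiv ℝ d (u t) w)
      (fderiv ℝ (fderiv ℝ d) (u t₀) u' w) t₀ :=
    (hd.hasFDerivAt.comp_hasDerivAt t₀ hu).clm_apply (hasDerivAt_const t₀ w) |>.congr_deriv
      (by simp)
  have hpairing : HasDerivAt (fun t => ⟪a t - a t₀, fderiv ℝ ψ (u t) w⟫)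
      ⟪a', fderiv ℝ ψ (u t₀) w⟫ t₀ :=
    ((ha.sub_const (a t₀)).inner ℝ ((hDψ.hasFDerivAt.comp_hasDerivAt t₀ hu).clm_apply
      (hasDerivAt_const t₀ w))).congr_deriv (by simp)
  have hEq : (fun t => fderiv ℝ d (u t) w) =ᶠ[𝓝 t₀]
      fun t => ⟪a t - a t₀, fderiv ℝ ψ (u t) w⟫ :=
    (hψ_near.and hcrit).mono fun t ⟨hdiff, hc⟩ =>
      fderiv_half_norm_sub_sq_apply_of_adjoint_eq_zero hdiff hc w
  rw [ContinuousLinearMap.adjoint_inner_left, (hgrad.congr_of_eventuallyEq hEq.symm).unique hpairing]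

end

/-- Chart formulation of Proposition A.1 (Weyl): for curves `(a(t), u(t))` staying in the
critical point locus, `Dψ(u(0))ᵀ a′(0) = H u′(0)` with `H` the Hessian of the distance
function. -/
theorem stmt_11 {m n : ℕ}
    (U : Set (EuclideanSpace ℝ (Fin m))) (hU : IsOpen U)
    (ψ : EuclideanSpace ℝ (Fin m) → EuclideanSpace ℝ (Fin n))
    (hψ : ContDiffOn ℝ 2 ψ U)
    (u : ℝ → EuclideanSpace ℝ (Fin m)) (a : ℝ → EuclideanSpace ℝ (Fin n))
    (hu : ContDiffOn ℝ 1 u (Set.Ioo (-1 : ℝ) 1))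
    (ha : ContDiffOn ℝ 1 a (Set.Ioo (-1 : ℝ) 1))
    (hmem : ∀ t ∈ Set.Ioo (-1 : ℝ) 1, u t ∈ U)
    (hcrit : ∀ t ∈ Set.Ioo (-1 : ℝ) 1,
      ContinuousLinearMap.adjoint (fderiv ℝ ψ (u t)) (a t - ψ (u t)) = 0)
    (H : EuclideanSpace ℝ (Fin m) →L[ℝ] EuclideanSpace ℝ (Fin m))
    (hH : ∀ v w, ⟪H v, w⟫ =
      fderiv ℝ (fderiv ℝ (fun z => (1 / 2 : ℝ) * ‖a 0 - ψ z‖ ^ 2)) (u 0) v w) :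
    ContinuousLinearMap.adjoint (fderiv ℝ ψ (u 0)) (deriv a 0) = H (deriv u 0) := by
  have hI : Set.Ioo (-1 : ℝ) 1 ∈ 𝓝 0 := Ioo_mem_nhds (by norm_num) (by norm_num)
  have hu0 : HasDerivAt u (deriv u 0) 0 :=
    ((hu.contDiffAt hI).differentiableAt one_ne_zero).hasDerivAt
  have ha0 : HasDerivAt a (deriv a 0) 0 :=
    ((ha.contDiffAt hI).differentiableAt one_ne_zero).hasDerivAt
  have hψ0 : ContDiffAt ℝ 2 ψ (u 0) :=
    hψ.contDiffAt (hU.mem_nhds (hmem 0 (mem_of_mem_nhds hI)))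
  refine ext_inner_right ℝ fun w => ?_
  rw [hH, inner_adjoint_fderiv_deriv_eq_fderiv_fderiv_half_norm_sub_sq hψ0 hu0 ha0
    (Filter.eventually_of_mem hI hcrit)]
end

section
/- Let ψ : U → ℝⁿ be a C^∞ map on an open set U ⊆ ℝᵐ with Dψ(u) injective for every u ∈ U. Let A ⊆ ℝⁿ be open and σ : A → U a C¹ map such that Dψ(σ(a))ᵀ(a − ψ(σ(a))) = 0 for every a ∈ A (σ is a smooth selection of critical points, e.g. of nearest points on ψ(U)). If at a₀ ∈ A the Hessian H at u₀ := σ(a₀) of d_{a₀}(u) := ½‖a₀ − ψ(u)‖² is invertible, then Dσ(a₀) = H⁻¹ Dψ(u₀)ᵀ; equivalently, the projection map P := ψ ∘ σ satisfies DP(a₀) = Dψ(u₀) H⁻¹ Dψ(u₀)ᵀ. -/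
/-!
Differentiating the critical-point identity `⟪a - ψ (σ a), Dψ(σ a) w⟫ = 0` at `a₀` in a
direction `h` gives
`⟪a₀ - ψ u₀, D²ψ(u₀) (Dσ h) w⟫ + ⟪h - Dψ(u₀) (Dσ h), Dψ(u₀) w⟫ = 0`,
while the Hessian of `½‖a₀ - ψ‖²` at `u₀` is
`⟪ψ u₀ - a₀, D²ψ(u₀) v w⟫ + ⟪Dψ(u₀) v, Dψ(u₀) w⟫`.
Adding the two, the second-order terms cancel and `H ∘ Dσ(a₀) = Dψ(u₀)ᵀ`; the formula for
`ψ ∘ σ` is then the chain rule.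
-/

open scoped RealInnerProductSpace Topology

section

variable {E F : Type*} [NormedAddCommGroup E] [NormedSpace ℝ E]
  [NormedAddCommGroup F] [InnerProductSpace ℝ F]

theorem HasFDerivAt.half_norm_const_sub_sq {ψ : E → F} {ψ' : E →L[ℝ] F} {u : E} (a : F)
    (hψ : HasFDerivAt ψ ψ' u) :
    HasFDerivAt (fun u => (1 / 2 : ℝ) * ‖a - ψ u‖ ^ 2) ((innerSL ℝ (ψ u - a)).comp ψ') u := by
  refine ((hψ.const_sub a).norm_sq.const_mul (1 / 2 : ℝ)).congr_fderiv ?_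
  ext w
  simp

theorem fderiv_fderiv_half_norm_const_sub_sq_apply {ψ : E → F} {u : E} (a : F)
    (hψ : ContDiffAt ℝ 2 ψ u) (v w : E) :
    fderiv ℝ (fderiv ℝ (fun u => (1 / 2 : ℝ) * ‖a - ψ u‖ ^ 2)) u v w =
      ⟪ψ u - a, fderiv ℝ (fderiv ℝ ψ) u v w⟫ + ⟪fderiv ℝ ψ u v, fderiv ℝ ψ u w⟫ := by
  have hfderiv : fderiv ℝ (fun u => (1 / 2 : ℝ) * ‖a - ψ u‖ ^ 2) =ᶠ[𝓝 u]
      fun u => (innerSL ℝ (ψ u - a)).comp (fderiv ℝ ψ u) := by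
    filter_upwards [hψ.eventually (by simp)] with x hx
    exact ((hx.differentiableAt (by simp)).hasFDerivAt.half_norm_const_sub_sq a).fderiv
  have hψ' : HasFDerivAt (fderiv ℝ ψ) (fderiv ℝ (fderiv ℝ ψ) u) u :=
    ((hψ.fderiv_right (m := 1) le_rfl).differentiableAt one_ne_zero).hasFDerivAt
  have hinner : HasFDerivAt (fun u => innerSL ℝ (ψ u - a))
      ((innerSL ℝ (E := F)).comp (fderiv ℝ ψ u)) u :=
    (innerSL ℝ (E := F)).hasFDerivAt.comp u
      ((hψ.differentiableAt (by simp)).hasFDerivAt.sub_const a)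
  rw [hfderiv.fderiv_eq, (hinner.clm_comp hψ').fderiv]
  simp [inner_sub_left]

theorem inner_fderiv_fderiv_add_inner_eq_zero_of_critical {ψ : E → F} {σ : F → E} {a₀ : F}
    (hψ : ContDiffAt ℝ 2 ψ (σ a₀)) (hσ : DifferentiableAt ℝ σ a₀)
    (hcrit : ∀ w, ∀ᶠ a in 𝓝 a₀, ⟪a - ψ (σ a), fderiv ℝ ψ (σ a) w⟫ = 0) (h : F) (w : E) :
    ⟪a₀ - ψ (σ a₀), fderiv ℝ (fderiv ℝ ψ) (σ a₀) (fderiv ℝ σ a₀ h) w⟫ +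
      ⟪h - fderiv ℝ ψ (σ a₀) (fderiv ℝ σ a₀ h), fderiv ℝ ψ (σ a₀) w⟫ = 0 := by
  have hψ₁ : HasFDerivAt ψ (fderiv ℝ ψ (σ a₀)) (σ a₀) :=
    (hψ.differentiableAt (by simp)).hasFDerivAt
  have hψ₂ : HasFDerivAt (fderiv ℝ ψ) (fderiv ℝ (fderiv ℝ ψ) (σ a₀)) (σ a₀) :=
    ((hψ.fderiv_right (m := 1) le_rfl).differentiableAt one_ne_zero).hasFDerivAt
  have hres : HasFDerivAt (fun a => a - ψ (σ a))
      (ContinuousLinearMap.id ℝ F - (fderiv ℝ ψ (σ a₀)).comp (fderiv ℝ σ a₀)) a₀ :=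
    (hasFDerivAt_id a₀).sub (hψ₁.comp a₀ hσ.hasFDerivAt)
  have htan : HasFDerivAt (fun a => fderiv ℝ ψ (σ a) w)
      ((ContinuousLinearMap.apply ℝ F w).comp
        ((fderiv ℝ (fderiv ℝ ψ) (σ a₀)).comp (fderiv ℝ σ a₀))) a₀ :=
    (ContinuousLinearMap.apply ℝ F w).hasFDerivAt.comp a₀ (hψ₂.comp a₀ hσ.hasFDerivAt)
  have hzero := ((hasFDerivAt_const (0 : ℝ) a₀).congr_of_eventuallyEq (hcrit w)).unique
    (hres.inner ℝ htan)
  have := congr($hzero h)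
  simp only [zero_apply, ContinuousLinearMap.comp_apply, ContinuousLinearMap.prod_apply,
    sub_apply, ContinuousLinearMap.id_apply, ContinuousLinearMap.apply_apply,
    fderivInnerCLM_apply] at this
  linarith

end

section

variable {E F : Type*} [NormedAddCommGroup E] [InnerProductSpace ℝ E] [CompleteSpace E]
  [NormedAddCommGroup F] [InnerProductSpace ℝ F] [CompleteSpace F]

theorem hessian_comp_fderiv_eq_adjoint_of_critical {ψ : E → F} {σ : F → E} {a₀ : F}
    (hψ : ContDiffAt ℝ 2 ψ (σ a₀)) (hσ : DifferentiableAt ℝ σ a₀)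
    (hcrit : ∀ᶠ a in 𝓝 a₀,
      ContinuousLinearMap.adjoint (fderiv ℝ ψ (σ a)) (a - ψ (σ a)) = 0)
    {H : E →L[ℝ] E}
    (hH : ∀ v w, ⟪H v, w⟫ =
      fderiv ℝ (fderiv ℝ (fun u => (1 / 2 : ℝ) * ‖a₀ - ψ u‖ ^ 2)) (σ a₀) v w) :
    H.comp (fderiv ℝ σ a₀) = ContinuousLinearMap.adjoint (fderiv ℝ ψ (σ a₀)) := by
  have hcrit_inner : ∀ w, ∀ᶠ a in 𝓝 a₀, ⟪a - ψ (σ a), fderiv ℝ ψ (σ a) w⟫ = 0 := fun w => by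
    filter_upwards [hcrit] with a ha
    rw [← ContinuousLinearMap.adjoint_inner_left, ha, inner_zero_left]
  ext1 h
  refine ext_inner_right ℝ fun w => ?_
  have := inner_fderiv_fderiv_add_inner_eq_zero_of_critical hψ hσ hcrit_inner h w
  rw [ContinuousLinearMap.comp_apply, hH, fderiv_fderiv_half_norm_const_sub_sq_apply a₀ hψ,
    ContinuousLinearMap.adjoint_inner_left]
  simp only [inner_sub_left] at this ⊢
  linarith

end

theorem stmt_12_general {m n : ℕ}
    (U : Set (EuclideanSpace ℝ (Fin m))) (hU : IsOpen U)
    (ψ : EuclideanSpace ℝ (Fin m) → EuclideanSpace ℝ (Fin n))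
    (hψ : ContDiffOn ℝ (⊤ : ℕ∞) ψ U)
    (A : Set (EuclideanSpace ℝ (Fin n))) (hA : IsOpen A)
    (σ : EuclideanSpace ℝ (Fin n) → EuclideanSpace ℝ (Fin m))
    (hσ : ContDiffOn ℝ 1 σ A)
    (hσU : ∀ a ∈ A, σ a ∈ U)
    (hcrit : ∀ a ∈ A,
      ContinuousLinearMap.adjoint (fderiv ℝ ψ (σ a)) (a - ψ (σ a)) = 0)
    (a₀ : EuclideanSpace ℝ (Fin n)) (ha₀ : a₀ ∈ A)
    (u₀ : EuclideanSpace ℝ (Fin m)) (hu₀ : u₀ = σ a₀)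
    (H Hinv : EuclideanSpace ℝ (Fin m) →L[ℝ] EuclideanSpace ℝ (Fin m))
    (hH : ∀ v w, ⟪H v, w⟫ =
      fderiv ℝ (fderiv ℝ (fun u => (1 / 2 : ℝ) * ‖a₀ - ψ u‖ ^ 2)) u₀ v w)
    (hHinv₂ : Hinv.comp H = ContinuousLinearMap.id ℝ (EuclideanSpace ℝ (Fin m))) :
    fderiv ℝ σ a₀ = Hinv.comp (ContinuousLinearMap.adjoint (fderiv ℝ ψ u₀)) ∧
    fderiv ℝ (fun a => ψ (σ a)) a₀ =
      ((fderiv ℝ ψ u₀).comp Hinv).comp (ContinuousLinearMap.adjoint (fderiv ℝ ψ u₀)) := by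
  subst hu₀
  have hψ₀ : ContDiffAt ℝ 2 ψ (σ a₀) :=
    ((hψ (σ a₀) (hσU a₀ ha₀)).contDiffAt (hU.mem_nhds (hσU a₀ ha₀))).of_le (by norm_cast)
  have hσ₀ : DifferentiableAt ℝ σ a₀ :=
    ((hσ a₀ ha₀).contDiffAt (hA.mem_nhds ha₀)).differentiableAt one_ne_zero
  have hDσ : fderiv ℝ σ a₀ = Hinv.comp (ContinuousLinearMap.adjoint (fderiv ℝ ψ (σ a₀))) := by
    rw [← hessian_comp_fderiv_eq_adjoint_of_critical hψ₀ hσ₀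
      (Filter.eventually_of_mem (hA.mem_nhds ha₀) hcrit) hH,
      ← ContinuousLinearMap.comp_assoc, hHinv₂, ContinuousLinearMap.id_comp]
  refine ⟨hDσ, ?_⟩
  rw [fderiv_fun_comp a₀ (hψ₀.differentiableAt (by simp)) hσ₀, hDσ, ContinuousLinearMap.comp_assoc]

/-- Chart formulation of Corollary A.3 (Abatzoglou): the derivative of a smooth selection of
critical points is `H⁻¹ Dψ(u₀)ᵀ`, and the derivative of the induced projection onto the
manifold is `Dψ(u₀) H⁻¹ Dψ(u₀)ᵀ`. -/
theorem stmt_12 {m n : ℕ}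
    (U : Set (EuclideanSpace ℝ (Fin m))) (hU : IsOpen U)
    (ψ : EuclideanSpace ℝ (Fin m) → EuclideanSpace ℝ (Fin n))
    (hψ : ContDiffOn ℝ (⊤ : ℕ∞) ψ U)
    (hinj : ∀ u ∈ U, Function.Injective (fderiv ℝ ψ u))
    (A : Set (EuclideanSpace ℝ (Fin n))) (hA : IsOpen A)
    (σ : EuclideanSpace ℝ (Fin n) → EuclideanSpace ℝ (Fin m))
    (hσ : ContDiffOn ℝ 1 σ A)
    (hσU : ∀ a ∈ A, σ a ∈ U)
    (hcrit : ∀ a ∈ A,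
      ContinuousLinearMap.adjoint (fderiv ℝ ψ (σ a)) (a - ψ (σ a)) = 0)
    (a₀ : EuclideanSpace ℝ (Fin n)) (ha₀ : a₀ ∈ A)
    (u₀ : EuclideanSpace ℝ (Fin m)) (hu₀ : u₀ = σ a₀)
    (H Hinv : EuclideanSpace ℝ (Fin m) →L[ℝ] EuclideanSpace ℝ (Fin m))
    (hH : ∀ v w, ⟪H v, w⟫ =
      fderiv ℝ (fderiv ℝ (fun u => (1 / 2 : ℝ) * ‖a₀ - ψ u‖ ^ 2)) u₀ v w)
    (hHinv₁ : H.comp Hinv = ContinuousLinearMap.id ℝ (EuclideanSpace ℝ (Fin m)))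
    (hHinv₂ : Hinv.comp H = ContinuousLinearMap.id ℝ (EuclideanSpace ℝ (Fin m))) :
    fderiv ℝ σ a₀ = Hinv.comp (ContinuousLinearMap.adjoint (fderiv ℝ ψ u₀)) ∧
    fderiv ℝ (fun a => ψ (σ a)) a₀ =
      ((fderiv ℝ ψ u₀).comp Hinv).comp (ContinuousLinearMap.adjoint (fderiv ℝ ψ u₀)) :=
  stmt_12_general U hU ψ hψ A hA σ hσ hσU hcrit a₀ ha₀ u₀ hu₀ H Hinv hH hHinv₂
end
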